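/- arXiv:1905.05383 — 7 statements merged into one kernel-verified Lean document; each statement's English description precedes it below -/
import Mathlib

section
/- (Corollary to Theorem 3: consistent systems.) Assume XᵀX = λ·I_ℓ for some λ > 0 and Xβ* = y (so r = 0). Let 0 < ε ≤ e^{−2}, let T be an integer with T ≥ 2·log(1/ε²), and assume n ≥ 8p/(1−p) and d̄ ≥ 8·μ·p/(1−p). Let B_{t,j} (t = 1,…,T, j = 1,…,n) be mutually independent {0,1}-valued random variables with P(B_{t,j} = 1) = 1−p, set Z_{t,i} = Σ_{j=1}^n B_{t,j}·1[i ∈ S_j], and starting from any β_0 ∈ ℝ^ℓ define β_t = β_{t−1} − γ_t·Σ_{i=1}^m (Z_{t,i}/(d_i·(1−p)))·(⟨x_i, β_{t−1}⟩ − y_i)·x_i with γ_t = min(1/2, log(1/ε²)/t)/‖XᵀX‖. Then E‖β_T − β*‖₂² ≤ ε²·‖β_0 − β*‖₂². -/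
open MeasureTheory ProbabilityTheory Matrix Finset

/-- The spectral norm (ℓ2→ℓ2 operator norm) of a real matrix. -/
noncomputable def specNorm {m l : ℕ} (M : Matrix (Fin m) (Fin l) ℝ) : ℝ :=
  ‖LinearMap.toContinuousLinearMap (Matrix.toEuclideanLin M)‖

/-!
Put `e_t = β_t - β*`. Since `y = X β*`, one step reads `e_{t+1} = e_t - γ_t Xᵀ (w ⊙ X e_t)` with
the random weights `w_i = Z_{t,i} / (d_i (1 - p))`, and the Bernoulli row `B_{t,·}` producing `w`
is independent of `e_t`, which only depends on the earlier rows. Expanding the square and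
averaging over `w` first, `E w_i = 1`, while pairwise balance gives
`E w_i w_i' = a := 1 + p/((1-p)n)` for `i ≠ i'` and `E w_i² = 1 + p/((1-p)d_i)`. With `XᵀX = λ I`
this yields `E‖e_{t+1}‖² ≤ (1 - 2γ_tλ + γ_t²(a λ² + c λ)) E‖e_t‖²`, where the norm weighting of
the degrees bounds the diagonal excess by `c := p/((1-p)σ)`. The hypotheses on `n` and `d̄` give
`a ≤ 9/8` and `c ≤ λ/8`, so the factor is at most `1 - γ_tλ` as long as `γ_tλ ≤ 1/2`. Finally
`∏ (1 - γ_tλ) ≤ exp (-∑ γ_tλ) ≤ exp (-log (1/ε²)) = ε²` because `T ≥ 2 log (1/ε²)`.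
-/

lemma specNorm_smul_one {l : ℕ} (hl : 0 < l) {c : ℝ} (hc : 0 ≤ c) :
    specNorm (c • (1 : Matrix (Fin l) (Fin l) ℝ)) = c := by
  have : Nonempty (Fin l) := ⟨⟨0, hl⟩⟩
  have hid : LinearMap.toContinuousLinearMap
      (Matrix.toEuclideanLin (c • (1 : Matrix (Fin l) (Fin l) ℝ))) =
        c • ContinuousLinearMap.id ℝ (EuclideanSpace ℝ (Fin l)) := by
    ext v
    simp
  rw [specNorm, hid, norm_smul, ContinuousLinearMap.norm_id, mul_one, Real.norm_of_nonneg hc]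

section Gram

variable {ι κ : Type*} [Fintype ι] (X : Matrix ι κ ℝ)

lemma sum_smul_smul_row_eq_vecMul (w u : ι → ℝ) : ∑ i, w i • (u i • X i) = (w * u) ᵥ* X := by
  simp only [vecMul_eq_sum, Pi.mul_apply, mul_smul]

variable [Fintype κ]

lemma vecMul_dotProduct_vecMul (c c' : ι → ℝ) :
    (c ᵥ* X) ⬝ᵥ (c' ᵥ* X) = ∑ i, ∑ i', c i * c' i' * (X * Xᵀ) i i' := by
  rw [← dotProduct_mulVec, ← mulVec_transpose, mulVec_mulVec]
  simp only [dotProduct, mulVec, Finset.mul_sum]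
  exact Finset.sum_congr rfl fun i _ => Finset.sum_congr rfl fun i' _ => by ring

lemma dotProduct_self_sub_smul_vecMul (w : ι → ℝ) (e : κ → ℝ) (γ : ℝ) :
    (e - γ • ((w * X *ᵥ e) ᵥ* X)) ⬝ᵥ (e - γ • ((w * X *ᵥ e) ᵥ* X)) =
      e ⬝ᵥ e - 2 * γ * ∑ i, w i * (X *ᵥ e) i ^ 2 +
        γ ^ 2 * ∑ i, ∑ i', w i * w i' * ((X *ᵥ e) i * (X *ᵥ e) i' * (X * Xᵀ) i i') := by
  have hcross : e ⬝ᵥ ((w * X *ᵥ e) ᵥ* X) = ∑ i, w i * (X *ᵥ e) i ^ 2 := by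
    rw [dotProduct_comm, ← dotProduct_mulVec]
    simp only [dotProduct, Pi.mul_apply, sq, mul_assoc]
  have hexpand : ∀ v : κ → ℝ,
      (e - γ • v) ⬝ᵥ (e - γ • v) = e ⬝ᵥ e - 2 * γ * (e ⬝ᵥ v) + γ ^ 2 * (v ⬝ᵥ v) := by
    intro v
    simp only [sub_dotProduct, dotProduct_sub, smul_dotProduct, dotProduct_smul, smul_eq_mul,
      dotProduct_comm v e]
    ring
  rw [hexpand, hcross, vecMul_dotProduct_vecMul]
  simp only [Pi.mul_apply]
  congr 2
  exact Finset.sum_congr rfl fun i _ => Finset.sum_congr rfl fun i' _ => by ring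

variable [DecidableEq κ] {X} {lam : ℝ}

lemma vecMul_mulVec_of_transpose_mul_self (hX : Xᵀ * X = lam • 1) (e : κ → ℝ) :
    (X *ᵥ e) ᵥ* X = lam • e := by
  rw [← mulVec_transpose, mulVec_mulVec, hX, smul_mulVec, one_mulVec]

lemma mulVec_dotProduct_mulVec_of_transpose_mul_self (hX : Xᵀ * X = lam • 1) (e : κ → ℝ) :
    (X *ᵥ e) ⬝ᵥ (X *ᵥ e) = lam * (e ⬝ᵥ e) := by
  rw [dotProduct_mulVec, vecMul_mulVec_of_transpose_mul_self hX, smul_dotProduct, smul_eq_mul]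

lemma sum_mul_gram_le_of_transpose_mul_self (hX : Xᵀ * X = lam • 1) (A : Matrix ι ι ℝ)
    {a c : ℝ} (hoff : ∀ i i', i ≠ i' → A i i' = a) (hdiag : ∀ i, (A i i - a) * (X * Xᵀ) i i ≤ c)
    (e : κ → ℝ) :
    ∑ i, ∑ i', A i i' * ((X *ᵥ e) i * (X *ᵥ e) i' * (X * Xᵀ) i i') ≤
      (a * lam ^ 2 + c * lam) * (e ⬝ᵥ e) := by
  classical
  set u := X *ᵥ e
  have hquad : ∑ i, ∑ i', u i * u i' * (X * Xᵀ) i i' = lam ^ 2 * (e ⬝ᵥ e) := by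
    rw [← vecMul_dotProduct_vecMul, vecMul_mulVec_of_transpose_mul_self hX, smul_dotProduct,
      dotProduct_smul, smul_eq_mul, smul_eq_mul]
    ring
  have hdiag' : ∑ i, (A i i - a) * (u i * u i * (X * Xᵀ) i i) ≤ c * lam * (e ⬝ᵥ e) := by
    calc ∑ i, (A i i - a) * (u i * u i * (X * Xᵀ) i i)
        ≤ ∑ i, c * (u i * u i) := Finset.sum_le_sum fun i _ => by
          linarith [mul_le_mul_of_nonneg_right (hdiag i) (mul_self_nonneg (u i))]
      _ = c * lam * (e ⬝ᵥ e) := by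
          rw [← Finset.mul_sum, ← dotProduct,
            mulVec_dotProduct_mulVec_of_transpose_mul_self hX, mul_assoc]
  have hsplit : ∑ i, ∑ i', A i i' * (u i * u i' * (X * Xᵀ) i i') =
      a * ∑ i, ∑ i', u i * u i' * (X * Xᵀ) i i' +
        ∑ i, (A i i - a) * (u i * u i * (X * Xᵀ) i i) := by
    rw [Finset.mul_sum, ← Finset.sum_add_distrib]
    refine Finset.sum_congr rfl fun i _ => ?_
    rw [Finset.mul_sum, ← Finset.add_sum_erase _ _ (Finset.mem_univ i),
      ← Finset.add_sum_erase _ (fun i' => a * _) (Finset.mem_univ i)]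
    have hrest : ∀ i' ∈ univ.erase i, A i i' * (u i * u i' * (X * Xᵀ) i i') =
        a * (u i * u i' * (X * Xᵀ) i i') := fun i' hi' => by
      rw [hoff i i' (Finset.ne_of_mem_erase hi').symm]
    rw [Finset.sum_congr rfl hrest]
    ring
  rw [hsplit, hquad]
  linarith

end Gram

section Bounded

variable {Ω E F : Type*} [PseudoMetricSpace E] [ProperSpace E] [PseudoMetricSpace F]

lemma isBounded_range_comp {f : Ω → E} (hf : Bornology.IsBounded (Set.range f)) {g : E → F}
    (hg : Continuous g) : Bornology.IsBounded (Set.range (g ∘ f)) :=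
  (hf.isCompact_closure.image hg).isBounded.subset
    (Set.range_comp g f ▸ Set.image_mono subset_closure)

lemma integrable_comp_of_isBounded_range {mΩ : MeasurableSpace Ω} {μ : Measure Ω}
    [IsFiniteMeasure μ] [MeasurableSpace E] [OpensMeasurableSpace E] {f : Ω → E}
    (hf : Measurable f) (hb : Bornology.IsBounded (Set.range f)) {g : E → ℝ}
    (hg : Continuous g) : Integrable (fun ω => g (f ω)) μ := by
  obtain ⟨C, hC⟩ := (isBounded_range_comp hb hg).exists_norm_le
  exact Integrable.of_bound (hg.measurable.comp hf).aestronglyMeasurable C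
    (Filter.Eventually.of_forall fun ω => hC _ (Set.mem_range_self ω))

end Bounded

lemma ProbabilityTheory.IndepFun.integral_sum_mul_eq_sum_integral_mul {Ω α β ι : Type*}
    {mΩ : MeasurableSpace Ω} {μ : Measure Ω} [MeasurableSpace α] [MeasurableSpace β]
    {V : Ω → α} {Y : Ω → β} (h : IndepFun V Y μ) (s : Finset ι) {φ : ι → α → ℝ}
    {ψ : ι → β → ℝ} (hφ : ∀ k, Measurable (φ k)) (hψ : ∀ k, Measurable (ψ k))
    (hφi : ∀ k, Integrable (fun ω => φ k (V ω)) μ)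
    (hψi : ∀ k, Integrable (fun ω => ψ k (Y ω)) μ) :
    ∫ ω, ∑ k ∈ s, φ k (V ω) * ψ k (Y ω) ∂μ =
      ∫ ω, ∑ k ∈ s, (∫ ω', φ k (V ω') ∂μ) * ψ k (Y ω) ∂μ := by
  have hindk : ∀ k, IndepFun (fun ω => φ k (V ω)) (fun ω => ψ k (Y ω)) μ :=
    fun k => h.comp (hφ k) (hψ k)
  have hprod : ∀ k, Integrable (fun ω => φ k (V ω) * ψ k (Y ω)) μ :=
    fun k => (hindk k).integrable_mul (hφi k) (hψi k)
  rw [integral_finsetSum _ fun k _ => hprod k,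
    integral_finsetSum _ fun k _ => (hψi k).const_mul _]
  refine Finset.sum_congr rfl fun k _ => ?_
  rw [(hindk k).integral_fun_mul_eq_mul_integral (hφi k).aestronglyMeasurable
    (hψi k).aestronglyMeasurable, integral_const_mul]

section ExpectedStep

variable {Ω ι κ : Type*} {mΩ : MeasurableSpace Ω} {μ : Measure Ω} [IsFiniteMeasure μ]
  [Fintype ι] [Fintype κ] [DecidableEq κ] {X : Matrix ι κ ℝ} {lam : ℝ}
  {W : Ω → ι → ℝ} {E : Ω → κ → ℝ}

lemma integral_sum_mul_mulVec_sq (hX : Xᵀ * X = lam • 1) (hWm : Measurable W)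
    (hEm : Measurable E) (hWb : Bornology.IsBounded (Set.range W))
    (hEb : Bornology.IsBounded (Set.range E)) (hind : IndepFun W E μ)
    (hmean : ∀ i, ∫ ω, W ω i ∂μ = 1) :
    ∫ ω, ∑ i, W ω i * (X *ᵥ E ω) i ^ 2 ∂μ = lam * ∫ ω, E ω ⬝ᵥ E ω ∂μ := by
  rw [hind.integral_sum_mul_eq_sum_integral_mul univ (φ := fun i w => w i)
    (ψ := fun i e => (X *ᵥ e) i ^ 2) (fun i => by fun_prop) (fun i => by fun_prop)
    (fun i => integrable_comp_of_isBounded_range hWm hWb (g := fun w => w i) (by fun_prop))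
    (fun i => integrable_comp_of_isBounded_range hEm hEb (g := fun e => (X *ᵥ e) i ^ 2)
      (by fun_prop))]
  have hu : ∀ e, ∑ i, (X *ᵥ e) i * (X *ᵥ e) i = lam * (e ⬝ᵥ e) :=
    mulVec_dotProduct_mulVec_of_transpose_mul_self hX
  simp only [hmean, one_mul, ← sq] at hu ⊢
  simp only [hu, integral_const_mul]

lemma integral_sum_sum_mul_gram_le (hX : Xᵀ * X = lam • 1) (hWm : Measurable W)
    (hEm : Measurable E) (hWb : Bornology.IsBounded (Set.range W))
    (hEb : Bornology.IsBounded (Set.range E)) (hind : IndepFun W E μ) {a c : ℝ}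
    (hoff : ∀ i i', i ≠ i' → ∫ ω, W ω i * W ω i' ∂μ = a)
    (hdiag : ∀ i, (∫ ω, W ω i * W ω i ∂μ - a) * (X * Xᵀ) i i ≤ c) :
    ∫ ω, ∑ i, ∑ i', W ω i * W ω i' * ((X *ᵥ E ω) i * (X *ᵥ E ω) i' * (X * Xᵀ) i i') ∂μ ≤
      (a * lam ^ 2 + c * lam) * ∫ ω, E ω ⬝ᵥ E ω ∂μ := by
  have hE : ∀ g : (κ → ℝ) → ℝ, Continuous g → Integrable (fun ω => g (E ω)) μ :=
    fun g hg => integrable_comp_of_isBounded_range hEm hEb hg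
  have hpairs : ∀ f : ι → ι → ℝ, ∑ i, ∑ i', f i i' = ∑ q : ι × ι, f q.1 q.2 :=
    fun f => (Fintype.sum_prod_type' f).symm
  simp only [hpairs]
  rw [hind.integral_sum_mul_eq_sum_integral_mul (univ : Finset (ι × ι))
    (φ := fun q w => w q.1 * w q.2)
    (ψ := fun q e => (X *ᵥ e) q.1 * (X *ᵥ e) q.2 * (X * Xᵀ) q.1 q.2)
    (fun q => by fun_prop) (fun q => by fun_prop)
    (fun q => integrable_comp_of_isBounded_range hWm hWb (g := fun w => w q.1 * w q.2)
      (by fun_prop))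
    (fun q => hE (fun e => (X *ᵥ e) q.1 * (X *ᵥ e) q.2 * (X * Xᵀ) q.1 q.2) (by fun_prop)),
    ← integral_const_mul]
  refine integral_mono (hE (fun e => ∑ q : ι × ι, (∫ ω', W ω' q.1 * W ω' q.2 ∂μ) *
      ((X *ᵥ e) q.1 * (X *ᵥ e) q.2 * (X * Xᵀ) q.1 q.2)) (by fun_prop))
    ((hE (fun e => e ⬝ᵥ e) (by fun_prop)).const_mul _) fun ω => ?_
  calc _ = ∑ i, ∑ i', (∫ ω', W ω' i * W ω' i' ∂μ) *
        ((X *ᵥ E ω) i * (X *ᵥ E ω) i' * (X * Xᵀ) i i') :=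
        Fintype.sum_prod_type' fun i i' => (∫ ω', W ω' i * W ω' i' ∂μ) *
          ((X *ᵥ E ω) i * (X *ᵥ E ω) i' * (X * Xᵀ) i i')
    _ ≤ _ := sum_mul_gram_le_of_transpose_mul_self hX
        (fun i i' => ∫ ω', W ω' i * W ω' i' ∂μ) hoff hdiag (E ω)

theorem integral_dotProduct_self_sub_smul_vecMul_le (hX : Xᵀ * X = lam • 1)
    (hWm : Measurable W) (hEm : Measurable E) (hWb : Bornology.IsBounded (Set.range W))
    (hEb : Bornology.IsBounded (Set.range E)) (hind : IndepFun W E μ)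
    (hmean : ∀ i, ∫ ω, W ω i ∂μ = 1) {a c : ℝ}
    (hoff : ∀ i i', i ≠ i' → ∫ ω, W ω i * W ω i' ∂μ = a)
    (hdiag : ∀ i, (∫ ω, W ω i * W ω i ∂μ - a) * (X * Xᵀ) i i ≤ c) (γ : ℝ) :
    ∫ ω, (E ω - γ • ((W ω * X *ᵥ E ω) ᵥ* X)) ⬝ᵥ (E ω - γ • ((W ω * X *ᵥ E ω) ᵥ* X)) ∂μ ≤
      (1 - 2 * γ * lam + γ ^ 2 * (a * lam ^ 2 + c * lam)) * ∫ ω, E ω ⬝ᵥ E ω ∂μ := by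
  have hWE : ∀ g : (ι → ℝ) × (κ → ℝ) → ℝ, Continuous g →
      Integrable (fun ω => g (W ω, E ω)) μ := fun g hg =>
    integrable_comp_of_isBounded_range (hWm.prodMk hEm) ((hWb.prod hEb).subset
      (Set.range_subset_iff.2 fun ω => ⟨Set.mem_range_self ω, Set.mem_range_self ω⟩)) hg
  have hEE : Integrable (fun ω => E ω ⬝ᵥ E ω) μ := hWE (fun q => q.2 ⬝ᵥ q.2) (by fun_prop)
  have hlin : Integrable (fun ω => 2 * γ * ∑ i, W ω i * (X *ᵥ E ω) i ^ 2) μ :=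
    (hWE (fun q => ∑ i, q.1 i * (X *ᵥ q.2) i ^ 2) (by fun_prop)).const_mul _
  have hEElin : Integrable
      (fun ω => E ω ⬝ᵥ E ω - 2 * γ * ∑ i, W ω i * (X *ᵥ E ω) i ^ 2) μ := hEE.sub hlin
  have hquad : Integrable (fun ω => γ ^ 2 * ∑ i, ∑ i', W ω i * W ω i' *
      ((X *ᵥ E ω) i * (X *ᵥ E ω) i' * (X * Xᵀ) i i')) μ :=
    (hWE (fun q => ∑ i, ∑ i', q.1 i * q.1 i' *
      ((X *ᵥ q.2) i * (X *ᵥ q.2) i' * (X * Xᵀ) i i')) (by fun_prop)).const_mul _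
  simp only [dotProduct_self_sub_smul_vecMul]
  rw [integral_add hEElin hquad, integral_sub hEE hlin, integral_const_mul,
    integral_const_mul, integral_sum_mul_mulVec_sq hX hWm hEm hWb hEb hind hmean]
  linarith [mul_le_mul_of_nonneg_left
    (integral_sum_sum_mul_gram_le hX hWm hEm hWb hEb hind hoff hdiag) (sq_nonneg γ)]

end ExpectedStep

section Bernoulli

variable {Ω ι : Type*} {mΩ : MeasurableSpace Ω} {μ : Measure Ω}

lemma integrable_of_eq_zero_or_one [IsFiniteMeasure μ] {b : Ω → ℝ}
    (h01 : ∀ ω, b ω = 0 ∨ b ω = 1) (hb : Measurable b) : Integrable b μ :=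
  Integrable.of_bound hb.aestronglyMeasurable 1
    (Filter.Eventually.of_forall fun ω => by rcases h01 ω with h | h <;> simp [h])

lemma integral_eq_of_eq_zero_or_one {b : Ω → ℝ} (h01 : ∀ ω, b ω = 0 ∨ b ω = 1)
    (hb : Measurable b) {q : ℝ} (hq : 0 ≤ q) (hP : μ {ω | b ω = 1} = ENNReal.ofReal q) :
    ∫ ω, b ω ∂μ = q := by
  have hind : b = Set.indicator {ω | b ω = 1} 1 := by
    funext ω
    rcases h01 ω with h | h <;> simp [Set.indicator, h]
  rw [hind, integral_indicator_one (s := {ω | b ω = 1}) (hb (measurableSet_singleton 1)),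
    measureReal_def, hP, ENNReal.toReal_ofReal hq]

variable {b : ι → Ω → ℝ}

lemma isBounded_range_of_eq_zero_or_one [Fintype ι] (h01 : ∀ j ω, b j ω = 0 ∨ b j ω = 1) :
    Bornology.IsBounded (Set.range fun ω j => b j ω) := by
  refine (Metric.isBounded_closedBall (x := 0) (r := 1)).subset
    (Set.range_subset_iff.2 fun ω => ?_)
  rw [mem_closedBall_zero_iff, pi_norm_le_iff_of_nonneg zero_le_one]
  intro j
  rcases h01 j ω with h | h <;> simp [h]

lemma integral_sum_mul_sum_of_eq_zero_or_one [IsFiniteMeasure μ] [DecidableEq ι]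
    (h01 : ∀ j ω, b j ω = 0 ∨ b j ω = 1) (hb : ∀ j, Measurable (b j)) {q : ℝ} (hq : 0 ≤ q)
    (hP : ∀ j, μ {ω | b j ω = 1} = ENNReal.ofReal q)
    (hind : ∀ j j', j ≠ j' → IndepFun (b j) (b j') μ) (s s' : Finset ι) :
    ∫ ω, (∑ j ∈ s, b j ω) * (∑ j ∈ s', b j ω) ∂μ =
      q ^ 2 * (#s * #s') + (q - q ^ 2) * #(s ∩ s') := by
  have hmean : ∀ j, ∫ ω, b j ω ∂μ = q := fun j =>
    integral_eq_of_eq_zero_or_one (h01 j) (hb j) hq (hP j)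
  have hint : ∀ j j', Integrable (fun ω => b j ω * b j' ω) μ := fun j j' =>
    integrable_of_eq_zero_or_one (fun ω => by rcases h01 j ω with h | h <;> simp [h, h01 j' ω])
      ((hb j).mul (hb j'))
  have hmul : ∀ j j', ∫ ω, b j ω * b j' ω ∂μ = q ^ 2 + if j = j' then q - q ^ 2 else 0 := by
    intro j j'
    split_ifs with h
    · subst h
      have hsq : ∀ ω, b j ω * b j ω = b j ω := fun ω => by
        rcases h01 j ω with h | h <;> simp [h]
      simp only [hsq, hmean]
      ring
    · rw [(hind j j' h).integral_fun_mul_eq_mul_integral (hb j).aestronglyMeasurable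
        (hb j').aestronglyMeasurable, hmean, hmean]
      ring
  simp only [Finset.sum_mul_sum]
  rw [integral_finsetSum _ fun j _ => integrable_finsetSum _ fun j' _ => hint j j']
  simp only [fun j => integral_finsetSum s' fun j' _ => hint j j', hmul, Finset.sum_add_distrib,
    Finset.sum_const, Finset.sum_ite_eq, nsmul_eq_mul]
  rw [← Finset.sum_filter, Finset.sum_const, nsmul_eq_mul, Finset.filter_mem_eq_inter]
  ring

end Bernoulli

/-- The weight `Z_i / (d_i (1 - p))` of data point `i` when the workers' Bernoulli draws are `r`. -/
noncomputable def sgcWeight {ι α : Type*} [Fintype ι] [DecidableEq α] (S : ι → Finset α)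
    (d : α → ℕ) (p : ℝ) (r : ι → ℝ) (i : α) : ℝ :=
  (∑ j ∈ {j | i ∈ S j}, r j) / (d i * (1 - p))

section Design

variable {Ω ι α : Type*} [Fintype ι] [DecidableEq α] {mΩ : MeasurableSpace Ω} {μ : Measure Ω}
  [IsFiniteMeasure μ] {S : ι → Finset α} {d : α → ℕ} {p : ℝ} {b : ι → Ω → ℝ}

lemma continuous_sgcWeight : Continuous (sgcWeight S d p) := by
  unfold sgcWeight
  fun_prop

lemma integral_sgcWeight (hdeg : ∀ i, #{j | i ∈ S j} = d i) (hd : ∀ i, 0 < d i) (hp : p < 1)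
    (h01 : ∀ j ω, b j ω = 0 ∨ b j ω = 1) (hb : ∀ j, Measurable (b j))
    (hP : ∀ j, μ {ω | b j ω = 1} = ENNReal.ofReal (1 - p)) (i : α) :
    ∫ ω, sgcWeight S d p (fun j => b j ω) i ∂μ = 1 := by
  have hd0 : (d i : ℝ) ≠ 0 := by exact_mod_cast (hd i).ne'
  have hp0 : 1 - p ≠ 0 := by linarith
  simp only [sgcWeight, integral_div,
    integral_finsetSum _ fun j _ => integrable_of_eq_zero_or_one (h01 j) (hb j),
    fun j => integral_eq_of_eq_zero_or_one (h01 j) (hb j) (by linarith) (hP j),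
    Finset.sum_const, hdeg, nsmul_eq_mul]
  field_simp

variable [DecidableEq ι]

lemma integral_sgcWeight_mul_sgcWeight (hdeg : ∀ i, #{j | i ∈ S j} = d i) (hd : ∀ i, 0 < d i)
    (hp : p < 1) (h01 : ∀ j ω, b j ω = 0 ∨ b j ω = 1) (hb : ∀ j, Measurable (b j))
    (hP : ∀ j, μ {ω | b j ω = 1} = ENNReal.ofReal (1 - p))
    (hind : ∀ j j', j ≠ j' → IndepFun (b j) (b j') μ) (i i' : α) :
    ∫ ω, sgcWeight S d p (fun j => b j ω) i * sgcWeight S d p (fun j => b j ω) i' ∂μ =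
      1 + p * #{j | i ∈ S j ∧ i' ∈ S j} / ((1 - p) * d i * d i') := by
  have hi : (d i : ℝ) ≠ 0 := by exact_mod_cast (hd i).ne'
  have hi' : (d i' : ℝ) ≠ 0 := by exact_mod_cast (hd i').ne'
  have hp0 : 1 - p ≠ 0 := by linarith
  simp only [sgcWeight, div_mul_div_comm, integral_div,
    integral_sum_mul_sum_of_eq_zero_or_one h01 hb (by linarith) hP hind, hdeg,
    ← Finset.filter_and]
  field_simp
  ring

lemma integral_sgcWeight_mul_sgcWeight_of_ne (hdeg : ∀ i, #{j | i ∈ S j} = d i)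
    (hd : ∀ i, 0 < d i) {n : ℕ}
    (hpair : ∀ i i', i ≠ i' → #{j | i ∈ S j ∧ i' ∈ S j} * n = d i * d i') (hp : p < 1)
    (h01 : ∀ j ω, b j ω = 0 ∨ b j ω = 1) (hb : ∀ j, Measurable (b j))
    (hP : ∀ j, μ {ω | b j ω = 1} = ENNReal.ofReal (1 - p))
    (hind : ∀ j j', j ≠ j' → IndepFun (b j) (b j') μ) {i i' : α} (hii' : i ≠ i') :
    ∫ ω, sgcWeight S d p (fun j => b j ω) i * sgcWeight S d p (fun j => b j ω) i' ∂μ =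
      1 + p / ((1 - p) * n) := by
  have hcard : (#{j | i ∈ S j ∧ i' ∈ S j} : ℝ) * n = d i * d i' := by
    exact_mod_cast hpair i i' hii'
  have hi : (d i : ℝ) ≠ 0 := by exact_mod_cast (hd i).ne'
  have hi' : (d i' : ℝ) ≠ 0 := by exact_mod_cast (hd i').ne'
  have hn : (n : ℝ) ≠ 0 := fun h => by simp [h, hi, hi'] at hcard
  have hp0 : 1 - p ≠ 0 := by linarith
  rw [integral_sgcWeight_mul_sgcWeight hdeg hd hp h01 hb hP hind,
    show (#{j | i ∈ S j ∧ i' ∈ S j} : ℝ) = d i * d i' / n by rw [eq_div_iff hn, hcard]]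
  field_simp

lemma integral_sgcWeight_mul_self (hdeg : ∀ i, #{j | i ∈ S j} = d i) (hd : ∀ i, 0 < d i)
    (hp : p < 1) (h01 : ∀ j ω, b j ω = 0 ∨ b j ω = 1) (hb : ∀ j, Measurable (b j))
    (hP : ∀ j, μ {ω | b j ω = 1} = ENNReal.ofReal (1 - p))
    (hind : ∀ j j', j ≠ j' → IndepFun (b j) (b j') μ) (i : α) :
    ∫ ω, sgcWeight S d p (fun j => b j ω) i * sgcWeight S d p (fun j => b j ω) i ∂μ =
      1 + p / ((1 - p) * d i) := by
  have hi : (d i : ℝ) ≠ 0 := by exact_mod_cast (hd i).ne'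
  have hp0 : 1 - p ≠ 0 := by linarith
  rw [integral_sgcWeight_mul_sgcWeight hdeg hd hp h01 hb hP hind]
  simp only [and_self, hdeg]
  field_simp

end Design

/-- `β - γ ∑ i, w i (⟪x_i, β⟫ - y_i) x_i` for the weights `w = sgcWeight S d p r`. -/
noncomputable def sgcUpdate {ι α κ : Type*} [Fintype ι] [DecidableEq α] [Fintype α] [Fintype κ]
    (S : ι → Finset α) (d : α → ℕ) (p : ℝ) (X : Matrix α κ ℝ) (y : α → ℝ) (γ : ℝ) (r : ι → ℝ)
    (β : κ → ℝ) : κ → ℝ :=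
  β - γ • ((sgcWeight S d p r * (X *ᵥ β - y)) ᵥ* X)

section Update

variable {ι α κ : Type*} [Fintype ι] [DecidableEq α] [Fintype α] [Fintype κ]
  {S : ι → Finset α} {d : α → ℕ} {p : ℝ} {X : Matrix α κ ℝ} {y : α → ℝ} {γ : ℝ}

lemma continuous_sgcUpdate : Continuous (Function.uncurry (sgcUpdate S d p X y γ)) := by
  have := continuous_sgcWeight (S := S) (d := d) (p := p)
  unfold sgcUpdate
  fun_prop

lemma sgcUpdate_sub {βstar : κ → ℝ} (hy : X *ᵥ βstar = y) (r : ι → ℝ) (β : κ → ℝ) :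
    sgcUpdate S d p X y γ r β - βstar =
      β - βstar - γ • ((sgcWeight S d p r * X *ᵥ (β - βstar)) ᵥ* X) := by
  rw [sgcUpdate, ← hy, ← mulVec_sub, sub_right_comm]

end Update

theorem integral_sgcStep_le {Ω ι α κ : Type*} {mΩ : MeasurableSpace Ω} {μ : Measure Ω}
    [IsFiniteMeasure μ] [Fintype ι] [DecidableEq ι] [Fintype α] [DecidableEq α]
    [Fintype κ] [DecidableEq κ] {S : ι → Finset α} {d : α → ℕ}
    (hdeg : ∀ i, #{j | i ∈ S j} = d i) (hd : ∀ i, 0 < d i) {n : ℕ}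
    (hpair : ∀ i i', i ≠ i' → #{j | i ∈ S j ∧ i' ∈ S j} * n = d i * d i')
    {p : ℝ} (hp0 : 0 ≤ p) (hp1 : p < 1) {X : Matrix α κ ℝ} {lam σ : ℝ}
    (hX : Xᵀ * X = lam • 1) (hlam : 0 ≤ lam) (hw : ∀ i, (d i : ℝ) = σ * ∑ k, X i k ^ 2)
    (hn8 : p / ((1 - p) * n) ≤ 1 / 8) (hσ8 : p / ((1 - p) * σ) ≤ lam / 8)
    {b : ι → Ω → ℝ} (h01 : ∀ j ω, b j ω = 0 ∨ b j ω = 1) (hb : ∀ j, Measurable (b j))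
    (hP : ∀ j, μ {ω | b j ω = 1} = ENNReal.ofReal (1 - p))
    (hind : ∀ j j', j ≠ j' → IndepFun (b j) (b j') μ)
    {E : Ω → κ → ℝ} (hE : Measurable E) (hEb : Bornology.IsBounded (Set.range E))
    (hbE : IndepFun (fun ω j => b j ω) E μ) {γ : ℝ} (hγ0 : 0 ≤ γ * lam)
    (hγ1 : γ * lam ≤ 1 / 2) :
    ∫ ω, (E ω - γ • ((sgcWeight S d p (fun j => b j ω) * X *ᵥ E ω) ᵥ* X)) ⬝ᵥ
        (E ω - γ • ((sgcWeight S d p (fun j => b j ω) * X *ᵥ E ω) ᵥ* X)) ∂μ ≤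
      (1 - γ * lam) * ∫ ω, E ω ⬝ᵥ E ω ∂μ := by
  have hdiag : ∀ i, (1 + p / ((1 - p) * d i) - (1 + p / ((1 - p) * n))) * (X * Xᵀ) i i ≤
      p / ((1 - p) * σ) := by
    intro i
    have hGi : σ * (X * Xᵀ) i i = d i := by simp only [hw i, mul_apply, transpose_apply, sq]
    have hdi : (d i : ℝ) ≠ 0 := by exact_mod_cast (hd i).ne'
    have hσ : σ ≠ 0 := left_ne_zero_of_mul (hGi ▸ hdi)
    have hG : (X * Xᵀ) i i ≠ 0 := right_ne_zero_of_mul (hGi ▸ hdi)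
    have hGnn : 0 ≤ (X * Xᵀ) i i := by
      rw [mul_apply]; exact Finset.sum_nonneg fun k _ => mul_self_nonneg _
    have hp : 0 < 1 - p := by linarith
    have hself : p / ((1 - p) * d i) * (X * Xᵀ) i i = p / ((1 - p) * σ) := by
      rw [← hGi]; field_simp
    have hcross : 0 ≤ p / ((1 - p) * n) * (X * Xᵀ) i i := by positivity
    rw [add_sub_add_left_eq_sub, sub_mul, hself]
    linarith
  have hrow : Measurable fun ω j => b j ω := measurable_pi_lambda _ hb
  have hstep := integral_dotProduct_self_sub_smul_vecMul_le (μ := μ)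
    (W := fun ω => sgcWeight S d p (fun j => b j ω)) hX
    (continuous_sgcWeight.measurable.comp hrow) hE
    (isBounded_range_comp (g := sgcWeight S d p) (isBounded_range_of_eq_zero_or_one h01)
      continuous_sgcWeight) hEb
    (hbE.comp continuous_sgcWeight.measurable measurable_id)
    (integral_sgcWeight hdeg hd hp1 h01 hb hP)
    (fun i i' => integral_sgcWeight_mul_sgcWeight_of_ne hdeg hd hpair hp1 h01 hb hP hind)
    (fun i => integral_sgcWeight_mul_self hdeg hd hp1 h01 hb hP hind i ▸ hdiag i) γ
  have hcoef : 1 - 2 * γ * lam +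
      γ ^ 2 * ((1 + p / ((1 - p) * n)) * lam ^ 2 + p / ((1 - p) * σ) * lam) ≤ 1 - γ * lam := by
    have ha := mul_le_mul_of_nonneg_right hn8 (sq_nonneg (γ * lam))
    have hc := mul_le_mul_of_nonneg_right hσ8 (mul_nonneg hlam (sq_nonneg γ))
    nlinarith
  exact hstep.trans (mul_le_mul_of_nonneg_right hcoef
    (integral_nonneg fun ω => Finset.sum_nonneg fun k _ => mul_self_nonneg _))

section Recursion

variable {Ω E F : Type*} {T : ℕ} {ζ : Fin T → Ω → E} {β : ℕ → Ω → F} {U : Fin T → E → F → F}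

lemma measurable_of_recursion [MeasurableSpace E] [MeasurableSpace F]
    {𝓕 : ℕ → MeasurableSpace Ω} (h𝓕 : Monotone 𝓕)
    (hU : ∀ t, Measurable (Function.uncurry (U t)))
    (hζ : ∀ t : Fin T, Measurable[𝓕 (t + 1)] (ζ t)) (hβ0 : Measurable[𝓕 0] (β 0))
    (hrec : ∀ (t : Fin T) ω, β (t + 1) ω = U t (ζ t ω) (β t ω)) :
    ∀ t ≤ T, Measurable[𝓕 t] (β t) := by
  intro t
  induction t with
  | zero => exact fun _ => hβ0
  | succ t ih =>
    intro ht
    have hβt : Measurable[𝓕 (t + 1)] (β t) := (ih (by omega)).mono (h𝓕 (Nat.le_succ t)) le_rfl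
    rw [show β (t + 1) = fun ω => U ⟨t, ht⟩ (ζ ⟨t, ht⟩ ω) (β t ω) from funext (hrec ⟨t, ht⟩)]
    exact (hU ⟨t, ht⟩).comp ((hζ ⟨t, ht⟩).prodMk hβt)

lemma isBounded_range_of_recursion [PseudoMetricSpace E] [ProperSpace E] [PseudoMetricSpace F]
    [ProperSpace F] (hU : ∀ t, Continuous (Function.uncurry (U t)))
    (hζ : ∀ t, Bornology.IsBounded (Set.range (ζ t)))
    (hβ0 : Bornology.IsBounded (Set.range (β 0)))
    (hrec : ∀ (t : Fin T) ω, β (t + 1) ω = U t (ζ t ω) (β t ω)) :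
    ∀ t ≤ T, Bornology.IsBounded (Set.range (β t)) := by
  intro t
  induction t with
  | zero => exact fun _ => hβ0
  | succ t ih =>
    intro ht
    rw [show β (t + 1) = Function.uncurry (U ⟨t, ht⟩) ∘ fun ω => (ζ ⟨t, ht⟩ ω, β t ω) from
      funext (hrec ⟨t, ht⟩)]
    refine isBounded_range_comp (((hζ ⟨t, ht⟩).prod (ih (by omega))).subset ?_) (hU _)
    exact Set.range_subset_iff.2 fun ω => ⟨Set.mem_range_self ω, Set.mem_range_self ω⟩

end Recursion

lemma ProbabilityTheory.iIndepFun.indepFun_row_of_recursion {Ω ι F : Type*}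
    {mΩ : MeasurableSpace Ω} {μ : Measure Ω} {T : ℕ} {B : Fin T × ι → Ω → ℝ}
    (hB : iIndepFun B μ) (hBm : ∀ q, Measurable (B q)) [MeasurableSpace F]
    {β : ℕ → Ω → F} {U : Fin T → (ι → ℝ) → F → F}
    (hU : ∀ t, Measurable (Function.uncurry (U t))) {β₀ : F} (hβ0 : ∀ ω, β 0 ω = β₀)
    (hrec : ∀ (t : Fin T) ω, β (t + 1) ω = U t (fun j => B (t, j) ω) (β t ω)) (t : Fin T) :
    IndepFun (fun ω j => B (t, j) ω) (β t) μ := by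
  -- `β t` is measurable for the σ-algebra of the rows before `t`, which is independent of row `t`.
  let σB : Set (Fin T × ι) → MeasurableSpace Ω := fun A =>
    ⨆ q ∈ A, MeasurableSpace.comap (B q) inferInstance
  have hrow : ∀ (s : Fin T) (A : Set (Fin T × ι)), (∀ j, (s, j) ∈ A) →
      Measurable[σB A] (fun ω j => B (s, j) ω) := fun s A hA =>
    @measurable_pi_lambda _ _ _ (σB A) _ _ fun j => (comap_measurable (B (s, j))).mono
      (le_iSup₂ (f := fun q (_ : q ∈ A) => MeasurableSpace.comap (B q) inferInstance) (s, j)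
        (hA j)) le_rfl
  let 𝓕 : ℕ → MeasurableSpace Ω := fun k => σB {q | (q.1 : ℕ) < k}
  have hmono : Monotone 𝓕 := fun k k' hk =>
    biSup_mono fun q (hq : (q.1 : ℕ) < k) => (lt_of_lt_of_le hq hk : (q.1 : ℕ) < k')
  have hβt : Measurable[𝓕 t] (β t) :=
    measurable_of_recursion hmono hU (fun s => hrow s _ fun j => Nat.lt_succ_self s)
      (funext hβ0 ▸ measurable_const) hrec t t.is_lt.le
  have hindep : Indep (σB {q | q.1 = t}) (𝓕 t) μ :=
    indep_iSup_of_disjoint (fun q => (hBm q).comap_le) ((iIndepFun_iff_iIndep _ _ _).1 hB)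
      (Set.disjoint_left.2 fun q (hq : q.1 = t) (hq' : (q.1 : ℕ) < t) => by
        rw [hq] at hq'; exact lt_irrefl _ hq')
  exact (IndepFun_iff_Indep _ _ _).2 (indep_of_indep_of_le_right
    (indep_of_indep_of_le_left hindep (hrow t _ fun j => rfl).comap_le) hβt.comap_le)

lemma le_prod_mul_of_le_mul_succ {a r : ℕ → ℝ} {T : ℕ} (hr : ∀ t < T, 0 ≤ r t)
    (h : ∀ t < T, a (t + 1) ≤ r t * a t) : a T ≤ (∏ t ∈ range T, r t) * a 0 := by
  induction T with
  | zero => simp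
  | succ T ih =>
    calc a (T + 1) ≤ r T * a T := h T (Nat.lt_succ_self T)
      _ ≤ r T * ((∏ t ∈ range T, r t) * a 0) :=
        mul_le_mul_of_nonneg_left (ih (fun t ht => hr t (by omega)) fun t ht => h t (by omega))
          (hr T (Nat.lt_succ_self T))
      _ = (∏ t ∈ range (T + 1), r t) * a 0 := by rw [Finset.prod_range_succ]; ring

theorem integral_sgc_iterate_le {Ω ι α κ : Type*} {mΩ : MeasurableSpace Ω} {μ : Measure Ω}
    [IsProbabilityMeasure μ] [Fintype ι] [DecidableEq ι] [Fintype α] [DecidableEq α]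
    [Fintype κ] [DecidableEq κ] {S : ι → Finset α} {d : α → ℕ}
    (hdeg : ∀ i, #{j | i ∈ S j} = d i) (hd : ∀ i, 0 < d i) {n : ℕ}
    (hpair : ∀ i i', i ≠ i' → #{j | i ∈ S j ∧ i' ∈ S j} * n = d i * d i')
    {p : ℝ} (hp0 : 0 ≤ p) (hp1 : p < 1) {X : Matrix α κ ℝ} {lam σ : ℝ}
    (hX : Xᵀ * X = lam • 1) (hlam : 0 ≤ lam) (hw : ∀ i, (d i : ℝ) = σ * ∑ k, X i k ^ 2)
    (hn8 : p / ((1 - p) * n) ≤ 1 / 8) (hσ8 : p / ((1 - p) * σ) ≤ lam / 8)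
    {y : α → ℝ} {βstar : κ → ℝ} (hy : X *ᵥ βstar = y) {T : ℕ} {B : Fin T × ι → Ω → ℝ}
    (h01 : ∀ q ω, B q ω = 0 ∨ B q ω = 1) (hBm : ∀ q, Measurable (B q))
    (hP : ∀ q, μ {ω | B q ω = 1} = ENNReal.ofReal (1 - p)) (hB : iIndepFun B μ)
    {γ : ℕ → ℝ} (hγ0 : ∀ t, 0 ≤ γ (t + 1) * lam) (hγ1 : ∀ t, γ (t + 1) * lam ≤ 1 / 2)
    {β : ℕ → Ω → κ → ℝ} {β₀ : κ → ℝ} (hβ0 : ∀ ω, β 0 ω = β₀)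
    (hrec : ∀ (t : Fin T) ω,
      β (t + 1) ω = sgcUpdate S d p X y (γ (t + 1)) (fun j => B (t, j) ω) (β t ω)) :
    ∫ ω, (β T ω - βstar) ⬝ᵥ (β T ω - βstar) ∂μ ≤
      (∏ t ∈ range T, (1 - γ (t + 1) * lam)) * ((β₀ - βstar) ⬝ᵥ (β₀ - βstar)) := by
  have hU : ∀ t : Fin T, Continuous (Function.uncurry (sgcUpdate S d p X y (γ (t + 1)))) :=
    fun t => continuous_sgcUpdate
  have hβm : ∀ t ≤ T, Measurable (β t) :=
    measurable_of_recursion (𝓕 := fun _ => mΩ) monotone_const (fun t => (hU t).measurable)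
      (fun t => measurable_pi_lambda _ fun j => hBm (t, j)) (funext hβ0 ▸ measurable_const) hrec
  have hβb : ∀ t ≤ T, Bornology.IsBounded (Set.range (β t)) :=
    isBounded_range_of_recursion hU (fun t => isBounded_range_of_eq_zero_or_one fun j => h01 _)
      (funext hβ0 ▸ Bornology.isBounded_singleton.subset Set.range_const_subset) hrec
  refine (le_prod_mul_of_le_mul_succ (a := fun t => ∫ ω, (β t ω - βstar) ⬝ᵥ (β t ω - βstar) ∂μ)
    (r := fun t => 1 - γ (t + 1) * lam) (fun t _ => by linarith [hγ1 t])
    fun t ht => ?_).trans_eq (by simp [hβ0])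
  simp only [hrec ⟨t, ht⟩, sgcUpdate_sub hy]
  exact integral_sgcStep_le hdeg hd hpair hp0 hp1 hX hlam hw hn8 hσ8 (fun j => h01 _)
    (fun j => hBm _) (fun j => hP _) (fun j j' hjj' => hB.indepFun (by simpa using hjj'))
    ((hβm t ht.le).sub_const βstar)
    (isBounded_range_comp (hβb t ht.le) (continuous_id.sub continuous_const))
    ((hB.indepFun_row_of_recursion hBm (fun t => (hU t).measurable) hβ0 hrec ⟨t, ht⟩).comp
      measurable_id (measurable_id.sub_const βstar)) (hγ0 t) (hγ1 t)

lemma prod_range_one_sub_min_le_sq {ε : ℝ} (hε : 0 < ε) (hε1 : ε ≤ 1) {T : ℕ}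
    (hT : 2 * Real.log (1 / ε ^ 2) ≤ T) :
    ∏ t ∈ range T, (1 - min (1 / 2) (Real.log (1 / ε ^ 2) / (t + 1))) ≤ ε ^ 2 := by
  set L := Real.log (1 / ε ^ 2)
  set g : ℕ → ℝ := fun t => min (1 / 2) (L / (t + 1))
  have hL : 0 ≤ L := Real.log_nonneg (one_le_one_div (by positivity) (pow_le_one₀ hε.le hε1))
  have hsum : L ≤ ∑ t ∈ range T, g t := by
    rcases Nat.eq_zero_or_pos T with rfl | hTpos
    · simp only [Nat.cast_zero] at hT; simp; linarith
    have hTpos' : (0 : ℝ) < T := by exact_mod_cast hTpos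
    calc L = T * min (1 / 2) (L / T) := by
          rw [min_eq_right (by rw [div_le_iff₀ hTpos']; linarith)]; field_simp
      _ = ∑ _t ∈ range T, min (1 / 2) (L / T) := by simp
      _ ≤ ∑ t ∈ range T, g t := Finset.sum_le_sum fun t ht => by
          have : (t : ℝ) + 1 ≤ T := by exact_mod_cast Finset.mem_range.1 ht
          exact min_le_min le_rfl (div_le_div_of_nonneg_left hL (by positivity) this)
  calc ∏ t ∈ range T, (1 - g t) ≤ ∏ t ∈ range T, Real.exp (-g t) :=
        Finset.prod_le_prod (fun t _ => by linarith [min_le_left (1 / 2 : ℝ) (L / (t + 1))])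
          fun t _ => by linarith [Real.add_one_le_exp (-g t)]
    _ = Real.exp (-∑ t ∈ range T, g t) := by rw [← Real.exp_sum, Finset.sum_neg_distrib]
    _ ≤ Real.exp (-L) := Real.exp_le_exp.2 (neg_le_neg hsum)
    _ = ε ^ 2 := by rw [← Real.log_inv, one_div, inv_inv, Real.exp_log (by positivity)]

section NormWeighted

variable {m n l : ℕ} {d : Fin m → ℕ} {X : Matrix (Fin m) (Fin l) ℝ} {σ dbar : ℝ}

lemma sum_sq_pos_of_norm_weighted (hd : ∀ i, 0 < d i) (hw : ∀ i, (d i : ℝ) = σ * ∑ k, X i k ^ 2)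
    (i : Fin m) : 0 < ∑ k, X i k ^ 2 :=
  lt_of_le_of_ne (by positivity) fun h => by
    have hdi := hw i
    rw [← h, mul_zero] at hdi
    exact (hd i).ne' (by exact_mod_cast hdi)

lemma specNorm_transpose_mul_self_of_norm_weighted (hm : 0 < m) (hd : ∀ i, 0 < d i)
    (hw : ∀ i, (d i : ℝ) = σ * ∑ k, X i k ^ 2) {lam : ℝ} (hlam : 0 ≤ lam)
    (hX : Xᵀ * X = lam • 1) : specNorm (Xᵀ * X) = lam := by
  have hl : 0 < l := Nat.pos_of_ne_zero fun h => by
    subst h; simpa using sum_sq_pos_of_norm_weighted hd hw ⟨0, hm⟩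
  rw [hX]; exact specNorm_smul_one hl hlam

lemma natCast_eq_of_norm_weighted (hm : 0 < m) (hd : ∀ i, 0 < d i)
    (hdbar : dbar = (∑ i, (d i : ℝ)) / m) (hσ : σ = n * dbar / ∑ i, ∑ k, X i k ^ 2)
    (hw : ∀ i, (d i : ℝ) = σ * ∑ k, X i k ^ 2) : (m : ℝ) = n := by
  have hsum : ∑ i, (d i : ℝ) = σ * ∑ i, ∑ k, X i k ^ 2 := by
    rw [Finset.mul_sum]; exact Finset.sum_congr rfl fun i _ => hw i
  have hpos : 0 < ∑ i, (d i : ℝ) :=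
    Finset.sum_pos (fun i _ => by exact_mod_cast hd i) ⟨⟨0, hm⟩, Finset.mem_univ _⟩
  have hF : 0 < ∑ i, ∑ k, X i k ^ 2 :=
    Finset.sum_pos (fun i _ => sum_sq_pos_of_norm_weighted hd hw i) ⟨⟨0, hm⟩, Finset.mem_univ _⟩
  have hm' : (m : ℝ) ≠ 0 := by positivity
  rw [hσ, div_mul_cancel₀ _ hF.ne', hdbar] at hsum
  field_simp at hsum
  exact hsum

lemma div_one_sub_mul_le_of_norm_weighted (hm : 0 < m) (hd : ∀ i, 0 < d i)
    (hdbar : dbar = (∑ i, (d i : ℝ)) / m) (hσ : σ = n * dbar / ∑ i, ∑ k, X i k ^ 2)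
    (hw : ∀ i, (d i : ℝ) = σ * ∑ k, X i k ^ 2) {lam μ p : ℝ} (hlam : 0 < lam) (hp : p < 1)
    (hμ : μ = (∑ i, ∑ k, X i k ^ 2) / (m * lam)) (hd8 : 8 * μ * p / (1 - p) ≤ dbar) :
    p / ((1 - p) * σ) ≤ lam / 8 := by
  have hF : 0 < ∑ i, ∑ k, X i k ^ 2 :=
    Finset.sum_pos (fun i _ => sum_sq_pos_of_norm_weighted hd hw i) ⟨⟨0, hm⟩, Finset.mem_univ _⟩
  have hm' : (0 : ℝ) < m := by exact_mod_cast hm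
  have hdbar0 : 0 < dbar := by
    rw [hdbar]
    exact div_pos (Finset.sum_pos (fun i _ => by exact_mod_cast hd i)
      ⟨⟨0, hm⟩, Finset.mem_univ _⟩) hm'
  have hp' : 0 < 1 - p := by linarith
  rw [hσ, ← natCast_eq_of_norm_weighted hm hd hdbar hσ hw]
  rw [hμ] at hd8
  field_simp at hd8 ⊢
  exact hd8

end NormWeighted

theorem sgc_convergence_l2_consistent_general
    (m n l T : ℕ) (hm : 0 < m)
    (S : Fin n → Finset (Fin m)) (d : Fin m → ℕ) (hdpos : ∀ i, 0 < d i)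
    (hdeg : ∀ i : Fin m, (Finset.univ.filter (fun j => i ∈ S j)).card = d i)
    (hpair : ∀ i i' : Fin m, i ≠ i' →
      (Finset.univ.filter (fun j => i ∈ S j ∧ i' ∈ S j)).card * n = d i * d i')
    (p : ℝ) (hp0 : 0 ≤ p) (hp1 : p < 1)
    (X : Matrix (Fin m) (Fin l) ℝ) (y : Fin m → ℝ) (βstar : Fin l → ℝ)
    (hconsistent : X.mulVec βstar = y)
    (lam : ℝ) (hlam : 0 < lam) (hspec : Xᵀ * X = lam • (1 : Matrix (Fin l) (Fin l) ℝ))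
    (σ dbar μ : ℝ)
    (hdbar : dbar = (∑ i, (d i : ℝ)) / m)
    (hσ : σ = n * dbar / (∑ i, ∑ k, X i k ^ 2))
    (hw : ∀ i, (d i : ℝ) = σ * ∑ k, X i k ^ 2)
    (hμ : μ = (∑ i, ∑ k, X i k ^ 2) / (m * specNorm (Xᵀ * X)))
    (ε : ℝ) (hε : 0 < ε) (hεe : ε ≤ Real.exp (-2))
    (hT : 2 * Real.log (1 / ε ^ 2) ≤ (T : ℝ))
    (hn8 : 8 * p / (1 - p) ≤ (n : ℝ))
    (hd8 : 8 * μ * p / (1 - p) ≤ dbar)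
    (Ω : Type*) [MeasureSpace Ω] [IsProbabilityMeasure (ℙ : Measure Ω)]
    (B : Fin T × Fin n → Ω → ℝ)
    (hB01 : ∀ tj ω, B tj ω = 0 ∨ B tj ω = 1)
    (hBmeas : ∀ tj, Measurable (B tj))
    (hBp : ∀ tj, (ℙ : Measure Ω) {ω | B tj ω = 1} = ENNReal.ofReal (1 - p))
    (hBindep : iIndepFun B ℙ)
    (Z : Fin T → Fin m → Ω → ℝ)
    (hZ : ∀ t i ω, Z t i ω = ∑ j, if i ∈ S j then B (t, j) ω else 0)
    (γ : ℕ → ℝ)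
    (hγ : ∀ t : ℕ, γ t = min (1 / 2) (Real.log (1 / ε ^ 2) / t) / specNorm (Xᵀ * X))
    (β0 : Fin l → ℝ) (β : ℕ → Ω → Fin l → ℝ)
    (hβ0 : ∀ ω, β 0 ω = β0)
    (hrec : ∀ t : Fin T, ∀ ω, β (t + 1) ω = β t ω - γ (t + 1) •
      ∑ i, (Z t i ω / ((d i : ℝ) * (1 - p))) •
        (((X.mulVec (β t ω)) i - y i) • (X i))) :
    ∫ ω, ∑ k, (β T ω k - βstar k) ^ 2 ≤
      ε ^ 2 * (∑ k, (β0 k - βstar k) ^ 2) := by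
  have hnorm := specNorm_transpose_mul_self_of_norm_weighted hm hdpos hw hlam.le hspec
  have hσ8 := div_one_sub_mul_le_of_norm_weighted hm hdpos hdbar hσ hw hlam hp1 (hnorm ▸ hμ) hd8
  have hn8' : p / ((1 - p) * n) ≤ 1 / 8 := by
    rw [div_le_iff₀ (by linarith)] at hn8
    exact div_le_of_le_mul₀ (mul_nonneg (by linarith) n.cast_nonneg) (by norm_num) (by linarith)
  have hε1 : ε ≤ 1 := hεe.trans (Real.exp_le_one_iff.2 (by norm_num))
  have hL : 0 ≤ Real.log (1 / ε ^ 2) :=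
    Real.log_nonneg (one_le_one_div (by positivity) (pow_le_one₀ hε.le hε1))
  have hγL : ∀ t : ℕ, γ (t + 1) * lam = min (1 / 2) (Real.log (1 / ε ^ 2) / (t + 1)) :=
    fun t => by rw [hγ, hnorm]; push_cast; field_simp
  have hrec' : ∀ (t : Fin T) ω,
      β (t + 1) ω = sgcUpdate S d p X y (γ (t + 1)) (fun j => B (t, j) ω) (β t ω) := by
    intro t ω
    rw [hrec t ω, sgcUpdate, ← sum_smul_smul_row_eq_vecMul]
    simp only [hZ, sgcWeight, Finset.sum_filter, Pi.sub_apply]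
  have hsq : ∀ v : Fin l → ℝ, ∑ k, v k ^ 2 = v ⬝ᵥ v := fun v => by simp [dotProduct, sq]
  simp only [← Pi.sub_apply, hsq]
  calc _ ≤ _ := integral_sgc_iterate_le hdeg hdpos hpair hp0 hp1 hspec hlam.le hw hn8' hσ8
        hconsistent hB01 hBmeas hBp hBindep (fun t => by rw [hγL]; positivity)
        (fun t => by rw [hγL]; exact min_le_left _ _) hβ0 hrec'
    _ ≤ ε ^ 2 * ((β0 - βstar) ⬝ᵥ (β0 - βstar)) := by
      simp only [hγL]
      exact mul_le_mul_of_nonneg_right (prod_range_one_sub_min_le_sq hε hε1 hT)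
        (Finset.sum_nonneg fun k _ => mul_self_nonneg _)

/-- **Corollary to Theorem 3: consistent systems.**  If moreover `Xβ* = y` (so `r = 0`),
then under the same hypotheses `E‖β_T − β*‖₂² ≤ ε² ‖β_0 − β*‖₂²`. -/
theorem sgc_convergence_l2_consistent
    (m n l T : ℕ) (hn : 1 ≤ n) (hm : 0 < m)
    (S : Fin n → Finset (Fin m)) (d : Fin m → ℕ) (hdpos : ∀ i, 0 < d i)
    (hdeg : ∀ i : Fin m, (Finset.univ.filter (fun j => i ∈ S j)).card = d i)
    (hpair : ∀ i i' : Fin m, i ≠ i' →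
      (Finset.univ.filter (fun j => i ∈ S j ∧ i' ∈ S j)).card * n = d i * d i')
    (hdn : ∀ i, d i ≤ n)
    (p : ℝ) (hp0 : 0 ≤ p) (hp1 : p < 1)
    (X : Matrix (Fin m) (Fin l) ℝ) (y : Fin m → ℝ) (βstar : Fin l → ℝ)
    (hnormal : Xᵀ.mulVec (X.mulVec βstar - y) = 0)
    (hconsistent : X.mulVec βstar = y)
    (lam : ℝ) (hlam : 0 < lam) (hspec : Xᵀ * X = lam • (1 : Matrix (Fin l) (Fin l) ℝ))
    (σ dbar μ : ℝ)
    (hdbar : dbar = (∑ i, (d i : ℝ)) / m)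
    (hσ : σ = n * dbar / (∑ i, ∑ k, X i k ^ 2))
    (hw : ∀ i, (d i : ℝ) = σ * ∑ k, X i k ^ 2)
    (hμ : μ = (∑ i, ∑ k, X i k ^ 2) / (m * specNorm (Xᵀ * X)))
    (ε : ℝ) (hε : 0 < ε) (hεe : ε ≤ Real.exp (-2))
    (hT : 2 * Real.log (1 / ε ^ 2) ≤ (T : ℝ))
    (hn8 : 8 * p / (1 - p) ≤ (n : ℝ))
    (hd8 : 8 * μ * p / (1 - p) ≤ dbar)
    (Ω : Type*) [MeasureSpace Ω] [IsProbabilityMeasure (ℙ : Measure Ω)]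
    (B : Fin T × Fin n → Ω → ℝ)
    (hB01 : ∀ tj ω, B tj ω = 0 ∨ B tj ω = 1)
    (hBmeas : ∀ tj, Measurable (B tj))
    (hBp : ∀ tj, (ℙ : Measure Ω) {ω | B tj ω = 1} = ENNReal.ofReal (1 - p))
    (hBindep : iIndepFun B ℙ)
    (Z : Fin T → Fin m → Ω → ℝ)
    (hZ : ∀ t i ω, Z t i ω = ∑ j, if i ∈ S j then B (t, j) ω else 0)
    (γ : ℕ → ℝ)
    (hγ : ∀ t : ℕ, γ t = min (1 / 2) (Real.log (1 / ε ^ 2) / t) / specNorm (Xᵀ * X))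
    (β0 : Fin l → ℝ) (β : ℕ → Ω → Fin l → ℝ)
    (hβ0 : ∀ ω, β 0 ω = β0)
    (hrec : ∀ t : Fin T, ∀ ω, β (t + 1) ω = β t ω - γ (t + 1) •
      ∑ i, (Z t i ω / ((d i : ℝ) * (1 - p))) •
        (((X.mulVec (β t ω)) i - y i) • (X i))) :
    ∫ ω, ∑ k, (β T ω k - βstar k) ^ 2 ≤
      ε ^ 2 * (∑ k, (β0 k - βstar k) ^ 2) :=
  sgc_convergence_l2_consistent_general m n l T hm S d hdpos hdeg hpair p hp0 hp1 X y βstar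
    hconsistent lam hlam hspec σ dbar μ hdbar hσ hw hμ ε hε hεe hT hn8 hd8 Ω B hB01 hBmeas hBp
    hBindep Z hZ γ hγ β0 β hβ0 hrec
end

section
/- (Raw one-step expected-error bound for SGC with the ℓ2 loss, before choosing the step size.) For every β ∈ ℝ^ℓ and every step size γ > 0, the SGC update β⁺ satisfies E‖β⁺ − β*‖₂² ≤ ( ‖I − γXᵀX‖² + (p/((1−p)·n))·γ²·‖XᵀX‖² + (2p/((1−p)·σ))·γ²·‖XᵀX‖ )·‖β − β*‖₂² + (2p/((1−p)·σ))·γ²·‖r‖₂², where the expectation is over the straggler variables B_1,…,B_n. -/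
open MeasureTheory ProbabilityTheory Matrix Finset

/-!
Write `e = β - β*` and `gᵢ = (⟨xᵢ, β⟩ - yᵢ) • xᵢ`. Regrouping the sum over data points by workers,
`β⁺ - β* = e - ∑ⱼ Bⱼ • Wⱼ` with `Wⱼ = γ/(1-p) • ∑_{i ∈ Sⱼ} gᵢ / dᵢ`. For independent
Bernoulli(1-p) coefficients, `E‖e - ∑ⱼ Bⱼ • Wⱼ‖² = ‖e - (1-p) • ∑ⱼ Wⱼ‖² + p(1-p) ∑ⱼ ‖Wⱼ‖²`.
Since point `i` lies in exactly `dᵢ` of the sets, `(1-p) • ∑ⱼ Wⱼ = γ • ∑ᵢ gᵢ = γ • XᵀX e` by the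
normal equations, so the first term is `‖(I - γXᵀX) e‖²`. Pairwise balance evaluates the
second: `∑ⱼ ‖∑_{i ∈ Sⱼ} gᵢ / dᵢ‖² = ‖∑ᵢ gᵢ‖² / n + ∑ᵢ (1/dᵢ - 1/n) ‖gᵢ‖²`. Finally the norm
weighting `dᵢ = σ‖xᵢ‖²` gives `‖gᵢ‖² / dᵢ = (⟨xᵢ, β⟩ - yᵢ)² / σ`, and the residual of `β` is at
most twice `‖Xe‖² + ‖r‖²`.
-/

section InnerProduct

variable {E ι : Type*} [NormedAddCommGroup E] [InnerProductSpace ℝ E] [Fintype ι]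

theorem norm_sub_sum_smul_sq (v : E) (b : ι → ℝ) (w : ι → E) :
    ‖v - ∑ j, b j • w j‖ ^ 2 = ‖v‖ ^ 2 + ∑ j, b j * (-2 * inner ℝ v (w j))
      + ∑ j, ∑ j', b j * b j' * inner ℝ (w j) (w j') := by
  rw [norm_sub_sq_real, ← real_inner_self_eq_norm_sq (∑ j, _)]
  simp only [inner_sum, sum_inner, real_inner_smul_left, real_inner_smul_right, mul_sum]
  rw [sub_eq_add_neg, ← sum_neg_distrib]
  congr 2
  · exact sum_congr rfl fun j _ => by ring
  · funext j
    exact sum_congr rfl fun j' _ => by rw [real_inner_comm]; ring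

end InnerProduct

section Bernoulli

variable {Ω : Type*} [MeasureSpace Ω]

theorem integrable_of_zero_or_one [IsProbabilityMeasure (ℙ : Measure Ω)] {f : Ω → ℝ}
    (hf : Measurable f) (h01 : ∀ ω, f ω = 0 ∨ f ω = 1) : Integrable f ℙ :=
  Integrable.of_bound (C := 1) hf.aestronglyMeasurable <| ae_of_all _ fun ω => by
    rcases h01 ω with h | h <;> simp [h]

theorem integral_of_zero_or_one {f : Ω → ℝ} (hf : Measurable f)
    (h01 : ∀ ω, f ω = 0 ∨ f ω = 1) {q : ℝ} (hq : 0 ≤ q)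
    (hfq : ℙ {ω | f ω = 1} = ENNReal.ofReal q) : ∫ ω, f ω = q := by
  have hf_eq : f = {ω | f ω = 1}.indicator 1 := funext fun ω => by
    rcases h01 ω with h | h <;> simp [h]
  rw [hf_eq, integral_indicator_one (s := {ω | f ω = 1}) (hf (measurableSet_singleton 1)),
    measureReal_def, hfq, ENNReal.toReal_ofReal hq]

variable {ι : Type*} [DecidableEq ι] {B : ι → Ω → ℝ} {q : ℝ}

theorem integral_mul_of_iIndepFun_zero_or_one (hB : ∀ j, Measurable (B j))
    (h01 : ∀ j ω, B j ω = 0 ∨ B j ω = 1) (hq : 0 ≤ q)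
    (hBq : ∀ j, ℙ {ω | B j ω = 1} = ENNReal.ofReal q) (hind : iIndepFun B ℙ) (j j' : ι) :
    ∫ ω, B j ω * B j' ω = if j = j' then q else q ^ 2 := by
  split_ifs with h
  · subst h
    have hsq : (fun ω => B j ω * B j ω) = B j := funext fun ω => by
      rcases h01 j ω with h | h <;> simp [h]
    rw [hsq, integral_of_zero_or_one (hB j) (h01 j) hq (hBq j)]
  · rw [(hind.indepFun h).integral_fun_mul_eq_mul_integral (hB j).aestronglyMeasurable
      (hB j').aestronglyMeasurable, integral_of_zero_or_one (hB j) (h01 j) hq (hBq j),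
      integral_of_zero_or_one (hB j') (h01 j') hq (hBq j'), sq]

theorem integral_norm_sub_sum_smul_sq [IsProbabilityMeasure (ℙ : Measure Ω)] [Fintype ι]
    {E : Type*} [NormedAddCommGroup E] [InnerProductSpace ℝ E]
    (hB : ∀ j, Measurable (B j)) (h01 : ∀ j ω, B j ω = 0 ∨ B j ω = 1) (hq : 0 ≤ q)
    (hBq : ∀ j, ℙ {ω | B j ω = 1} = ENNReal.ofReal q) (hind : iIndepFun B ℙ)
    (v : E) (w : ι → E) :
    ∫ ω, ‖v - ∑ j, B j ω • w j‖ ^ 2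
      = ‖v - q • ∑ j, w j‖ ^ 2 + q * (1 - q) * ∑ j, ‖w j‖ ^ 2 := by
  have hint : ∀ j, Integrable (B j) ℙ := fun j => integrable_of_zero_or_one (hB j) (h01 j)
  have hint₂ : ∀ j j', Integrable (fun ω => B j ω * B j' ω) ℙ := fun j j' =>
    integrable_of_zero_or_one ((hB j).mul (hB j')) fun ω => by
      rcases h01 j ω with h | h <;> rcases h01 j' ω with h' | h' <;> simp [h, h']
  simp_rw [norm_sub_sum_smul_sq v, smul_sum, norm_sub_sum_smul_sq v (fun _ => q)]
  rw [integral_add, integral_add, integral_const, integral_finsetSum, integral_finsetSum]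
  · simp_rw [integral_finsetSum _ fun j' _ => (hint₂ _ j').mul_const _, integral_mul_const,
      integral_of_zero_or_one (hB _) (h01 _) hq (hBq _),
      integral_mul_of_iIndepFun_zero_or_one hB h01 hq hBq hind]
    simp only [probReal_univ, one_smul, ← real_inner_self_eq_norm_sq, mul_sum]
    have hsplit : ∀ j j' : ι, (if j = j' then q else q ^ 2) * inner ℝ (w j) (w j')
        = q * q * inner ℝ (w j) (w j') + if j = j' then q * (1 - q) * inner ℝ (w j) (w j') else 0 :=
      fun j j' => by split_ifs <;> ring
    simp only [hsplit, sum_add_distrib, sum_ite_eq, mem_univ, if_true]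
    ring
  all_goals fun_prop

end Bernoulli

section PairwiseBalanced

variable {ι κ : Type*} [Fintype ι] [DecidableEq κ]

structure IsPairwiseBalanced (S : ι → Finset κ) (d : κ → ℕ) : Prop where
  card_filter_mem : ∀ i, #{j | i ∈ S j} = d i
  card_filter_mem_and_mem :
    ∀ i i', i ≠ i' → #{j | i ∈ S j ∧ i' ∈ S j} * Fintype.card ι = d i * d i'

theorem sum_sum_mem_eq_sum_card_smul [Fintype κ] {M : Type*} [AddCommMonoid M]
    (S : ι → Finset κ) (f : κ → M) : ∑ j, ∑ i ∈ S j, f i = ∑ i, #{j | i ∈ S j} • f i := by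
  rw [sum_comm' (t' := univ) (s' := fun i => {j | i ∈ S j}) (by simp)]
  simp only [sum_const]

theorem sum_sum_mem_sum_mem_eq_sum_card_smul [Fintype κ] {M : Type*} [AddCommMonoid M]
    (S : ι → Finset κ) (F : κ → κ → M) :
    ∑ j, ∑ i ∈ S j, ∑ i' ∈ S j, F i i' = ∑ i, ∑ i', #{j | i ∈ S j ∧ i' ∈ S j} • F i i' := by
  simp_rw [← sum_product']
  rw [sum_sum_mem_eq_sum_card_smul (fun j => S j ×ˢ S j) (fun x => F x.1 x.2)]
  simp_rw [mem_product, univ_product_univ]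

theorem sum_sum_ite_mem_smul [Fintype κ] {R M : Type*} [Semiring R] [AddCommMonoid M]
    [Module R M] (S : ι → Finset κ) (b : ι → R) (f : κ → M) :
    ∑ i, (∑ j, if i ∈ S j then b j else 0) • f i = ∑ j, b j • ∑ i ∈ S j, f i := by
  simp only [sum_smul, smul_sum, ite_smul, zero_smul]
  rw [sum_comm]
  simp only [sum_ite_mem, univ_inter]

namespace IsPairwiseBalanced

variable {S : ι → Finset κ} {d : κ → ℕ}

theorem sum_sum_mem_inv_smul [Fintype κ] {M : Type*} [AddCommMonoid M] [Module ℝ M]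
    (h : IsPairwiseBalanced S d) (hd : ∀ i, d i ≠ 0) (g : κ → M) :
    ∑ j, ∑ i ∈ S j, (d i : ℝ)⁻¹ • g i = ∑ i, g i := by
  rw [sum_sum_mem_eq_sum_card_smul]
  refine sum_congr rfl fun i _ => ?_
  rw [h.card_filter_mem, ← Nat.cast_smul_eq_nsmul ℝ, smul_smul,
    mul_inv_cancel₀ (Nat.cast_ne_zero.mpr (hd i)), one_smul]

variable [Nonempty ι]

theorem card_filter_mem_and_mem_eq (h : IsPairwiseBalanced S d) (i i' : κ) :
    (#{j | i ∈ S j ∧ i' ∈ S j} : ℝ)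
      = d i * d i' / Fintype.card ι
        + if i = i' then (d i - d i ^ 2 / Fintype.card ι : ℝ) else 0 := by
  have hn : (Fintype.card ι : ℝ) ≠ 0 := by positivity
  split_ifs with hii'
  · subst hii'
    simp only [and_self, h.card_filter_mem]
    ring
  · rw [add_zero, eq_div_iff hn]
    exact_mod_cast h.card_filter_mem_and_mem i i' hii'

variable {E : Type*} [NormedAddCommGroup E] [InnerProductSpace ℝ E] [Fintype κ]

theorem sum_norm_sum_sq (h : IsPairwiseBalanced S d) (u : κ → E) :
    ∑ j, ‖∑ i ∈ S j, u i‖ ^ 2 = (Fintype.card ι : ℝ)⁻¹ * ‖∑ i, (d i : ℝ) • u i‖ ^ 2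
      + ∑ i, (d i - d i ^ 2 / Fintype.card ι : ℝ) * ‖u i‖ ^ 2 := by
  simp only [← real_inner_self_eq_norm_sq, sum_inner, inner_sum, real_inner_smul_left,
    real_inner_smul_right]
  rw [sum_sum_mem_sum_mem_eq_sum_card_smul S (fun i i' => inner ℝ (u i') (u i))]
  simp only [nsmul_eq_mul, h.card_filter_mem_and_mem_eq, add_mul, ite_mul, zero_mul,
    sum_add_distrib, sum_ite_eq, mem_univ, if_true, mul_sum]
  congr 1
  exact sum_congr rfl fun i _ => sum_congr rfl fun i' _ => by ring

theorem sum_norm_sum_inv_smul_sq (h : IsPairwiseBalanced S d) (hd : ∀ i, d i ≠ 0)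
    (g : κ → E) :
    ∑ j, ‖∑ i ∈ S j, (d i : ℝ)⁻¹ • g i‖ ^ 2 = (Fintype.card ι : ℝ)⁻¹ * ‖∑ i, g i‖ ^ 2
      + ∑ i, ((d i : ℝ)⁻¹ - (Fintype.card ι : ℝ)⁻¹) * ‖g i‖ ^ 2 := by
  have hd' : ∀ i, (d i : ℝ) ≠ 0 := fun i => Nat.cast_ne_zero.mpr (hd i)
  simp only [h.sum_norm_sum_sq, smul_smul, mul_inv_cancel₀ (hd' _), one_smul, norm_smul,
    mul_pow, norm_inv, Real.norm_natCast]
  congr 1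
  refine sum_congr rfl fun i _ => ?_
  field_simp [hd' i]

theorem integral_norm_sub_smul_sum_sq {Ω : Type*} [MeasureSpace Ω]
    [IsProbabilityMeasure (ℙ : Measure Ω)] [DecidableEq ι] (h : IsPairwiseBalanced S d)
    (hd : ∀ i, d i ≠ 0) {p : ℝ} (hp1 : p < 1) {B : ι → Ω → ℝ}
    (hB : ∀ j, Measurable (B j)) (h01 : ∀ j ω, B j ω = 0 ∨ B j ω = 1)
    (hBp : ∀ j, ℙ {ω | B j ω = 1} = ENNReal.ofReal (1 - p)) (hind : iIndepFun B ℙ)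
    {Z : κ → Ω → ℝ} (hZ : ∀ i ω, Z i ω = ∑ j, if i ∈ S j then B j ω else 0)
    (v : E) (γ : ℝ) (g : κ → E) :
    ∫ ω, ‖v - γ • ∑ i, (Z i ω / (d i * (1 - p))) • g i‖ ^ 2
      = ‖v - γ • ∑ i, g i‖ ^ 2 + p / (1 - p) * γ ^ 2 * ((Fintype.card ι : ℝ)⁻¹ * ‖∑ i, g i‖ ^ 2
        + ∑ i, ((d i : ℝ)⁻¹ - (Fintype.card ι : ℝ)⁻¹) * ‖g i‖ ^ 2) := by
  have hp : 1 - p ≠ 0 := by linarith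
  have hcoded : ∀ ω, γ • ∑ i, (Z i ω / (d i * (1 - p))) • g i
      = ∑ j, B j ω • (γ / (1 - p)) • ∑ i ∈ S j, (d i : ℝ)⁻¹ • g i := fun ω => calc
    _ = ∑ i, Z i ω • (γ / (1 - p)) • (d i : ℝ)⁻¹ • g i := by
      rw [smul_sum]
      refine sum_congr rfl fun i _ => ?_
      simp only [smul_smul]
      congr 1
      field_simp
    _ = _ := by simp only [hZ, sum_sum_ite_mem_smul, smul_sum]
  simp_rw [hcoded]
  rw [integral_norm_sub_sum_smul_sq hB h01 (by linarith) hBp hind]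
  simp only [← smul_sum, smul_smul, norm_smul, h.sum_sum_mem_inv_smul hd, mul_pow, ← mul_sum,
    h.sum_norm_sum_inv_smul_sq hd]
  rw [mul_div_cancel₀ γ hp, Real.norm_eq_abs, sq_abs]
  field_simp
  ring

end IsPairwiseBalanced

end PairwiseBalanced

section LeastSquares

variable {m l : ℕ}

theorem sum_sq_eq_norm_toLp_sq {ι : Type*} [Fintype ι] (v : ι → ℝ) :
    ∑ k, v k ^ 2 = ‖WithLp.toLp 2 v‖ ^ 2 :=
  (EuclideanSpace.real_norm_sq_eq _).symm

theorem norm_toLp_mulVec_le (M : Matrix (Fin m) (Fin l) ℝ) (v : Fin l → ℝ) :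
    ‖WithLp.toLp 2 (M *ᵥ v)‖ ≤ specNorm M * ‖WithLp.toLp 2 v‖ :=
  (LinearMap.toContinuousLinearMap (Matrix.toEuclideanLin M)).le_opNorm (WithLp.toLp 2 v)

theorem norm_toLp_mulVec_sq_le (X : Matrix (Fin m) (Fin l) ℝ) (v : Fin l → ℝ) :
    ‖WithLp.toLp 2 (X *ᵥ v)‖ ^ 2 ≤ specNorm (Xᵀ * X) * ‖WithLp.toLp 2 v‖ ^ 2 := calc
  _ = inner ℝ (WithLp.toLp 2 v) (WithLp.toLp 2 ((Xᵀ * X) *ᵥ v)) := by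
    rw [← real_inner_self_eq_norm_sq, EuclideanSpace.inner_toLp_toLp,
      EuclideanSpace.inner_toLp_toLp, star_trivial, star_trivial, ← mulVec_mulVec,
      mulVec_transpose, ← dotProduct_mulVec]
  _ ≤ ‖WithLp.toLp 2 v‖ * (specNorm (Xᵀ * X) * ‖WithLp.toLp 2 v‖) :=
    (real_inner_le_norm _ _).trans (by gcongr; exact norm_toLp_mulVec_le _ _)
  _ = _ := by ring

theorem transpose_mulVec_residual_eq (X : Matrix (Fin m) (Fin l) ℝ) (y : Fin m → ℝ)
    {βstar : Fin l → ℝ} (hnormal : Xᵀ *ᵥ (X *ᵥ βstar - y) = 0) (β : Fin l → ℝ) :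
    Xᵀ *ᵥ (X *ᵥ β - y) = (Xᵀ * X) *ᵥ (β - βstar) := by
  rw [← mulVec_mulVec, ← sub_add_sub_cancel _ (X *ᵥ βstar), ← mulVec_sub, mulVec_add, hnormal,
    add_zero]

theorem sum_sq_residual_le (X : Matrix (Fin m) (Fin l) ℝ) (y : Fin m → ℝ) (β βstar : Fin l → ℝ) :
    ∑ i, (X *ᵥ β - y) i ^ 2 ≤ 2 * (specNorm (Xᵀ * X) * ∑ k, (β k - βstar k) ^ 2
      + ∑ i, (X *ᵥ βstar - y) i ^ 2) := calc
  _ = ∑ i, ((X *ᵥ (β - βstar)) i + (X *ᵥ βstar - y) i) ^ 2 := by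
    simp only [mulVec_sub, Pi.sub_apply, sub_add_sub_cancel]
  _ ≤ ∑ i, 2 * ((X *ᵥ (β - βstar)) i ^ 2 + (X *ᵥ βstar - y) i ^ 2) :=
    sum_le_sum fun i _ => add_sq_le
  _ ≤ _ := by
    have he : ∑ k, (β k - βstar k) ^ 2 = ‖WithLp.toLp 2 (β - βstar)‖ ^ 2 :=
      sum_sq_eq_norm_toLp_sq _
    rw [← mul_sum, sum_add_distrib, sum_sq_eq_norm_toLp_sq (X *ᵥ _), he]
    gcongr
    exact norm_toLp_mulVec_sq_le X _

theorem sum_inv_sub_inv_mul_norm_sq_le {κ ι : Type*} [Fintype κ] [Fintype ι]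
    (X : Matrix κ ι ℝ) {d : κ → ℕ} {σ N : ℝ} (hd : ∀ i, d i ≠ 0)
    (hw : ∀ i, (d i : ℝ) = σ * ∑ k, X i k ^ 2) (hN : 0 ≤ N) (t : κ → ℝ) :
    ∑ i, ((d i : ℝ)⁻¹ - N⁻¹) * ‖WithLp.toLp 2 (t i • X i)‖ ^ 2 ≤ σ⁻¹ * ∑ i, t i ^ 2 := by
  rw [mul_sum]
  refine sum_le_sum fun i _ => ?_
  have hdi : (d i : ℝ) ≠ 0 := Nat.cast_ne_zero.mpr (hd i)
  have hσ : σ ≠ 0 := left_ne_zero_of_mul (hw i ▸ hdi)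
  have hs : ∑ k, X i k ^ 2 ≠ 0 := right_ne_zero_of_mul (hw i ▸ hdi)
  calc ((d i : ℝ)⁻¹ - N⁻¹) * ‖WithLp.toLp 2 (t i • X i)‖ ^ 2
      ≤ (d i : ℝ)⁻¹ * ‖WithLp.toLp 2 (t i • X i)‖ ^ 2 := by gcongr; linarith [inv_nonneg.mpr hN]
    _ = σ⁻¹ * t i ^ 2 := by
      rw [← sum_sq_eq_norm_toLp_sq, hw i]
      simp only [Pi.smul_apply, smul_eq_mul, mul_pow, ← mul_sum]
      field_simp

theorem integral_sum_sq_sgc_update_sub_eq {n : ℕ} [NeZero n] {S : Fin n → Finset (Fin m)}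
    {d : Fin m → ℕ} (hS : IsPairwiseBalanced S d) (hd : ∀ i, d i ≠ 0) {p : ℝ} (hp1 : p < 1)
    {X : Matrix (Fin m) (Fin l) ℝ} {y : Fin m → ℝ} {βstar : Fin l → ℝ}
    (hnormal : Xᵀ *ᵥ (X *ᵥ βstar - y) = 0) {Ω : Type*} [MeasureSpace Ω]
    [IsProbabilityMeasure (ℙ : Measure Ω)] {B : Fin n → Ω → ℝ}
    (hB01 : ∀ j ω, B j ω = 0 ∨ B j ω = 1) (hBmeas : ∀ j, Measurable (B j))
    (hBp : ∀ j, ℙ {ω | B j ω = 1} = ENNReal.ofReal (1 - p)) (hBindep : iIndepFun B ℙ)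
    {Z : Fin m → Ω → ℝ} (hZ : ∀ i ω, Z i ω = ∑ j, if i ∈ S j then B j ω else 0)
    {γ : ℝ} {β : Fin l → ℝ} {βplus : Ω → Fin l → ℝ}
    (hβplus : ∀ ω, βplus ω = β - γ •
      ∑ i, (Z i ω / ((d i : ℝ) * (1 - p))) • (((X *ᵥ β) i - y i) • (X i))) :
    ∫ ω, ∑ k, (βplus ω k - βstar k) ^ 2
      = ‖WithLp.toLp 2 ((1 - γ • (Xᵀ * X)) *ᵥ (β - βstar))‖ ^ 2 + p / (1 - p) * γ ^ 2 *
        ((n : ℝ)⁻¹ * ‖WithLp.toLp 2 ((Xᵀ * X) *ᵥ (β - βstar))‖ ^ 2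
          + ∑ i, ((d i : ℝ)⁻¹ - (n : ℝ)⁻¹) * ‖WithLp.toLp 2 ((X *ᵥ β - y) i • X i)‖ ^ 2) := by
  set g : Fin m → EuclideanSpace ℝ (Fin l) := fun i => WithLp.toLp 2 ((X *ᵥ β - y) i • X i)
  have hupdate : ∀ ω, ∑ k, (βplus ω k - βstar k) ^ 2
      = ‖WithLp.toLp 2 (β - βstar) - γ • ∑ i, (Z i ω / (d i * (1 - p))) • g i‖ ^ 2 := fun ω =>
    (sum_sq_eq_norm_toLp_sq (βplus ω - βstar)).trans <| by
      rw [hβplus]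
      simp only [g, WithLp.toLp_sub, WithLp.toLp_smul, WithLp.toLp_sum, Pi.sub_apply,
        sub_right_comm]
  have hgrad : ∑ i, g i = WithLp.toLp 2 ((Xᵀ * X) *ᵥ (β - βstar)) := by
    rw [← transpose_mulVec_residual_eq X y hnormal, mulVec_transpose, vecMul_eq_sum,
      WithLp.toLp_sum]
  rw [integral_congr_ae (ae_of_all _ hupdate),
    hS.integral_norm_sub_smul_sum_sq hd hp1 hBmeas hB01 hBp hBindep hZ, hgrad, Fintype.card_fin,
    sub_mulVec, one_mulVec, smul_mulVec]
  rfl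

end LeastSquares

theorem sgc_one_step_raw_bound_general
    (m n l : ℕ) (hn : 1 ≤ n)
    (S : Fin n → Finset (Fin m)) (d : Fin m → ℕ) (hdpos : ∀ i, 0 < d i)
    (hdeg : ∀ i : Fin m, (Finset.univ.filter (fun j => i ∈ S j)).card = d i)
    (hpair : ∀ i i' : Fin m, i ≠ i' →
      (Finset.univ.filter (fun j => i ∈ S j ∧ i' ∈ S j)).card * n = d i * d i')
    (p : ℝ) (hp0 : 0 ≤ p) (hp1 : p < 1)
    (X : Matrix (Fin m) (Fin l) ℝ) (y : Fin m → ℝ) (βstar : Fin l → ℝ)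
    (hnormal : Xᵀ.mulVec (X.mulVec βstar - y) = 0)
    (σ dbar : ℝ)
    (hdbar : dbar = (∑ i, (d i : ℝ)) / m)
    (hσ : σ = n * dbar / (∑ i, ∑ k, X i k ^ 2))
    (hw : ∀ i, (d i : ℝ) = σ * ∑ k, X i k ^ 2)
    (Ω : Type*) [MeasureSpace Ω] [IsProbabilityMeasure (ℙ : Measure Ω)]
    (B : Fin n → Ω → ℝ)
    (hB01 : ∀ j ω, B j ω = 0 ∨ B j ω = 1)
    (hBmeas : ∀ j, Measurable (B j))
    (hBp : ∀ j, (ℙ : Measure Ω) {ω | B j ω = 1} = ENNReal.ofReal (1 - p))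
    (hBindep : iIndepFun B ℙ)
    (Z : Fin m → Ω → ℝ)
    (hZ : ∀ i ω, Z i ω = ∑ j, if i ∈ S j then B j ω else 0)
    (γ : ℝ)
    (β : Fin l → ℝ) (βplus : Ω → Fin l → ℝ)
    (hβplus : ∀ ω, βplus ω = β - γ •
      ∑ i, (Z i ω / ((d i : ℝ) * (1 - p))) • (((X.mulVec β) i - y i) • (X i))) :
    ∫ ω, ∑ k, (βplus ω k - βstar k) ^ 2 ≤
      (specNorm (1 - γ • (Xᵀ * X)) ^ 2
          + p / ((1 - p) * n) * γ ^ 2 * specNorm (Xᵀ * X) ^ 2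
          + 2 * p / ((1 - p) * σ) * γ ^ 2 * specNorm (Xᵀ * X))
        * (∑ k, (β k - βstar k) ^ 2)
      + 2 * p / ((1 - p) * σ) * γ ^ 2 * ∑ i, (X.mulVec βstar - y) i ^ 2 := by
  have hd : ∀ i, d i ≠ 0 := fun i => (hdpos i).ne'
  have : NeZero n := ⟨by omega⟩
  have hS : IsPairwiseBalanced S d := ⟨hdeg, by simpa only [Fintype.card_fin] using hpair⟩
  have hσ₀ : 0 ≤ σ := by rw [hσ, hdbar]; positivity
  have hp : 0 ≤ p / (1 - p) := div_nonneg hp0 (by linarith)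
  have he : ∑ k, (β k - βstar k) ^ 2 = ‖WithLp.toLp 2 (β - βstar)‖ ^ 2 :=
    sum_sq_eq_norm_toLp_sq _
  have hvariance := (sum_inv_sub_inv_mul_norm_sq_le X hd hw (Nat.cast_nonneg n) (X *ᵥ β - y)).trans
    (mul_le_mul_of_nonneg_left (sum_sq_residual_le X y β βstar) (inv_nonneg.mpr hσ₀))
  rw [integral_sum_sq_sgc_update_sub_eq hS hd hp1 hnormal hB01 hBmeas hBp hBindep hZ hβplus]
  calc _ ≤ (specNorm (1 - γ • (Xᵀ * X)) * ‖WithLp.toLp 2 (β - βstar)‖) ^ 2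
        + p / (1 - p) * γ ^ 2 * ((n : ℝ)⁻¹ * (specNorm (Xᵀ * X) * ‖WithLp.toLp 2 (β - βstar)‖) ^ 2
          + σ⁻¹ * (2 * (specNorm (Xᵀ * X) * ∑ k, (β k - βstar k) ^ 2
            + ∑ i, (X *ᵥ βstar - y) i ^ 2))) := by
        gcongr <;> exact norm_toLp_mulVec_le _ _
    _ = _ := by
      rw [he]
      simp only [div_eq_mul_inv, mul_inv]
      ring

/-- **Raw one-step expected-error bound for SGC with the ℓ2 loss.**
`E‖β⁺ − β*‖₂² ≤ (‖I − γXᵀX‖² + (p/((1−p)n)) γ² ‖XᵀX‖² + (2p/((1−p)σ)) γ² ‖XᵀX‖) ‖β − β*‖₂²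
  + (2p/((1−p)σ)) γ² ‖r‖₂²`. -/
theorem sgc_one_step_raw_bound
    (m n l : ℕ) (hn : 1 ≤ n)
    (S : Fin n → Finset (Fin m)) (d : Fin m → ℕ) (hdpos : ∀ i, 0 < d i)
    (hdeg : ∀ i : Fin m, (Finset.univ.filter (fun j => i ∈ S j)).card = d i)
    (hpair : ∀ i i' : Fin m, i ≠ i' →
      (Finset.univ.filter (fun j => i ∈ S j ∧ i' ∈ S j)).card * n = d i * d i')
    (hdn : ∀ i, d i ≤ n)
    (p : ℝ) (hp0 : 0 ≤ p) (hp1 : p < 1)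
    (X : Matrix (Fin m) (Fin l) ℝ) (y : Fin m → ℝ) (βstar : Fin l → ℝ)
    (hnormal : Xᵀ.mulVec (X.mulVec βstar - y) = 0)
    (σ dbar : ℝ)
    (hdbar : dbar = (∑ i, (d i : ℝ)) / m)
    (hσ : σ = n * dbar / (∑ i, ∑ k, X i k ^ 2))
    (hw : ∀ i, (d i : ℝ) = σ * ∑ k, X i k ^ 2)
    (Ω : Type*) [MeasureSpace Ω] [IsProbabilityMeasure (ℙ : Measure Ω)]
    (B : Fin n → Ω → ℝ)
    (hB01 : ∀ j ω, B j ω = 0 ∨ B j ω = 1)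
    (hBmeas : ∀ j, Measurable (B j))
    (hBp : ∀ j, (ℙ : Measure Ω) {ω | B j ω = 1} = ENNReal.ofReal (1 - p))
    (hBindep : iIndepFun B ℙ)
    (Z : Fin m → Ω → ℝ)
    (hZ : ∀ i ω, Z i ω = ∑ j, if i ∈ S j then B j ω else 0)
    (γ : ℝ) (hγ : 0 < γ)
    (β : Fin l → ℝ) (βplus : Ω → Fin l → ℝ)
    (hβplus : ∀ ω, βplus ω = β - γ •
      ∑ i, (Z i ω / ((d i : ℝ) * (1 - p))) • (((X.mulVec β) i - y i) • (X i))) :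
    ∫ ω, ∑ k, (βplus ω k - βstar k) ^ 2 ≤
      (specNorm (1 - γ • (Xᵀ * X)) ^ 2
          + p / ((1 - p) * n) * γ ^ 2 * specNorm (Xᵀ * X) ^ 2
          + 2 * p / ((1 - p) * σ) * γ ^ 2 * specNorm (Xᵀ * X))
        * (∑ k, (β k - βstar k) ^ 2)
      + 2 * p / ((1 - p) * σ) * γ ^ 2 * ∑ i, (X.mulVec βstar - y) i ^ 2 :=
  sgc_one_step_raw_bound_general m n l hn S d hdpos hdeg hpair p hp0 hp1 X y βstar hnormal σ dbar
    hdbar hσ hw Ω B hB01 hBmeas hBp hBindep Z hZ γ β βplus hβplus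
end

section
/- (Covariance matrix identity for weighted degrees.) Let D_Z̃ and D_d be the m×m diagonal matrices with diagonal entries Z̃_i and d_i respectively. Then E[D_Z̃ · X·Xᵀ · D_Z̃] = p·(1−p)·( (1/n)·D_d·X·Xᵀ·D_d + (1/σ)·(I − D_d/n)·D_d² ), where the expectation is taken entrywise. -/
/-!
Entry `(a, b)` of `D_Z̃ X Xᵀ D_Z̃` is `(X Xᵀ)_ab Z̃_a Z̃_b`, and `E[Z̃_a Z̃_b] = Cov(Z_a, Z_b)`.
Since `Z_i` is a sum of independent Bernoulli(`1 - p`) variables over the workers holding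
`i`, this covariance is `p (1 - p)` times the number of workers holding both `a` and `b`:
by pairwise balance that is `d_a d_b / n` off the diagonal and `d_a` on it. The diagonal
then matches the right-hand side because the norm weighting gives `d_a² / σ = d_a ‖x_a‖²`.
-/

open MeasureTheory ProbabilityTheory Matrix Finset

section ZeroOne

variable {Ω : Type*} [MeasurableSpace Ω] {μ : Measure Ω} {B : Ω → ℝ}

lemma memLp_of_zero_or_one [IsFiniteMeasure μ] (hB01 : ∀ ω, B ω = 0 ∨ B ω = 1)
    (hB : Measurable B) (r : ENNReal) : MemLp B r μ :=
  memLp_of_bounded (a := 0) (b := 1)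
    (ae_of_all _ fun ω => by rcases hB01 ω with h | h <;> simp [h]) hB.aestronglyMeasurable r

lemma integral_of_zero_or_one_s7 (hB01 : ∀ ω, B ω = 0 ∨ B ω = 1) (hB : Measurable B) :
    μ[B] = μ.real {ω | B ω = 1} := by
  have hB_eq : B = {ω | B ω = 1}.indicator 1 := by
    funext ω
    rcases hB01 ω with h | h <;> simp [h]
  conv_lhs => rw [hB_eq]
  exact integral_indicator_one (hB (measurableSet_singleton 1))

lemma variance_of_zero_or_one [IsProbabilityMeasure μ] (hB01 : ∀ ω, B ω = 0 ∨ B ω = 1)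
    (hB : Measurable B) :
    Var[B; μ] = μ.real {ω | B ω = 1} * (1 - μ.real {ω | B ω = 1}) := by
  have hsq : B ^ 2 = B := by
    funext ω
    rcases hB01 ω with h | h <;> simp [h]
  rw [variance_eq_sub (memLp_of_zero_or_one hB01 hB 2), hsq, integral_of_zero_or_one_s7 hB01 hB]
  ring

end ZeroOne

section Sum

variable {Ω ι : Type*} [MeasurableSpace Ω] {μ : Measure Ω} {B : ι → Ω → ℝ} {q : ℝ}

lemma covariance_sum_sum_of_pairwise_indepFun [IsFiniteMeasure μ] [DecidableEq ι]
    (hB : ∀ j, MemLp (B j) 2 μ)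
    (hindep : Pairwise fun j k => IndepFun (B j) (B k) μ) (s t : Finset ι) :
    cov[∑ j ∈ s, B j, ∑ k ∈ t, B k; μ] = ∑ j ∈ s ∩ t, Var[B j; μ] := by
  have hcov : ∀ j k, cov[B j, B k; μ] = if j = k then Var[B j; μ] else 0 := by
    intro j k
    split_ifs with hjk
    · rw [hjk, covariance_self (hB k).aemeasurable]
    · exact (hindep hjk).covariance_eq_zero (hB j) (hB k)
  rw [covariance_sum_sum' (fun j _ => hB j) (fun k _ => hB k), ← sum_ite_mem]
  simp only [hcov, sum_ite_eq]

lemma integral_sum_of_zero_or_one [IsFiniteMeasure μ] (hB01 : ∀ j ω, B j ω = 0 ∨ B j ω = 1)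
    (hB : ∀ j, Measurable (B j)) (hq : ∀ j, μ.real {ω | B j ω = 1} = q) (s : Finset ι) :
    μ[∑ j ∈ s, B j] = #s * q := by
  simp only [Finset.sum_apply]
  rw [integral_finsetSum s fun j _ => (memLp_of_zero_or_one (hB01 j) (hB j) 1).integrable le_rfl]
  simp only [integral_of_zero_or_one_s7 (hB01 _) (hB _), hq, sum_const, nsmul_eq_mul]

lemma covariance_sum_sum_of_zero_or_one [IsProbabilityMeasure μ] [DecidableEq ι]
    (hB01 : ∀ j ω, B j ω = 0 ∨ B j ω = 1) (hB : ∀ j, Measurable (B j))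
    (hq : ∀ j, μ.real {ω | B j ω = 1} = q)
    (hindep : Pairwise fun j k => IndepFun (B j) (B k) μ) (s t : Finset ι) :
    cov[∑ j ∈ s, B j, ∑ k ∈ t, B k; μ] = q * (1 - q) * #(s ∩ t) := by
  rw [covariance_sum_sum_of_pairwise_indepFun (fun j => memLp_of_zero_or_one (hB01 j) (hB j) 2)
    hindep]
  simp only [variance_of_zero_or_one (hB01 _) (hB _), hq, sum_const, nsmul_eq_mul]
  ring

lemma integral_centered_sum_mul_centered_sum [IsProbabilityMeasure μ] [DecidableEq ι]
    (hB01 : ∀ j ω, B j ω = 0 ∨ B j ω = 1) (hB : ∀ j, Measurable (B j))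
    (hq : ∀ j, μ.real {ω | B j ω = 1} = q)
    (hindep : Pairwise fun j k => IndepFun (B j) (B k) μ) (s t : Finset ι) :
    ∫ ω, (∑ j ∈ s, B j ω - #s * q) * (∑ k ∈ t, B k ω - #t * q) ∂μ
      = q * (1 - q) * #(s ∩ t) := by
  rw [← covariance_sum_sum_of_zero_or_one hB01 hB hq hindep, covariance,
    integral_sum_of_zero_or_one hB01 hB hq, integral_sum_of_zero_or_one hB01 hB hq]
  simp only [Finset.sum_apply]

end Sum

lemma integral_diagonal_mul_mul_diagonal_apply {Ω ι : Type*} [MeasurableSpace Ω]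
    {μ : Measure Ω} [Fintype ι] [DecidableEq ι] (Z : ι → Ω → ℝ) (M : Matrix ι ι ℝ)
    (a b : ι) :
    ∫ ω, (diagonal (fun i => Z i ω) * M * diagonal (fun i => Z i ω)) a b ∂μ
      = M a b * ∫ ω, Z a ω * Z b ω ∂μ := by
  rw [← integral_const_mul]
  congr with ω
  simp only [mul_diagonal, diagonal_mul]
  ring

lemma mul_self_div_eq_mul_of_eq_mul {d σ w : ℝ} (h : d = σ * w) : d * d / σ = d * w := by
  rcases eq_or_ne σ 0 with rfl | hσ
  · simp [h]
  · rw [h]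
    field_simp

theorem sgc_covariance_identity_general
    (m n l : ℕ) (hn : 1 ≤ n)
    (S : Fin n → Finset (Fin m)) (d : Fin m → ℕ)
    (hdeg : ∀ i : Fin m, (Finset.univ.filter (fun j => i ∈ S j)).card = d i)
    (hpair : ∀ i i' : Fin m, i ≠ i' →
      (Finset.univ.filter (fun j => i ∈ S j ∧ i' ∈ S j)).card * n = d i * d i')
    (p : ℝ) (hp1 : p < 1)
    (Ω : Type*) [MeasureSpace Ω] [IsProbabilityMeasure (ℙ : Measure Ω)]
    (B : Fin n → Ω → ℝ)
    (hB01 : ∀ j ω, B j ω = 0 ∨ B j ω = 1)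
    (hBmeas : ∀ j, Measurable (B j))
    (hBp : ∀ j, (ℙ : Measure Ω) {ω | B j ω = 1} = ENNReal.ofReal (1 - p))
    (hBindep : iIndepFun B ℙ)
    (Z : Fin m → Ω → ℝ)
    (hZ : ∀ i ω, Z i ω = ∑ j, if i ∈ S j then B j ω else 0)
    (Zt : Fin m → Ω → ℝ)
    (hZt : ∀ i ω, Zt i ω = Z i ω - (d i : ℝ) * (1 - p))
    (X : Matrix (Fin m) (Fin l) ℝ)
    (σ : ℝ)
    (hw : ∀ i, (d i : ℝ) = σ * ∑ k, X i k ^ 2)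
    (Dd Mrhs : Matrix (Fin m) (Fin m) ℝ)
    (hDd : Dd = Matrix.diagonal (fun i => (d i : ℝ)))
    (hMrhs : Mrhs = (p * (1 - p)) •
      ((1 / (n : ℝ)) • (Dd * (X * Xᵀ) * Dd) +
        (1 / σ) • ((1 - (1 / (n : ℝ)) • Dd) * (Dd * Dd)))) :
    ∀ a b : Fin m,
      (∫ ω, (Matrix.diagonal (fun i => Zt i ω) * (X * Xᵀ) *
          Matrix.diagonal (fun i => Zt i ω)) a b) = Mrhs a b := by
  intro a b
  have hq : ∀ j, (ℙ : Measure Ω).real {ω | B j ω = 1} = 1 - p := fun j => by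
    rw [measureReal_def, hBp j, ENNReal.toReal_ofReal (by linarith)]
  set s : Fin m → Finset (Fin n) := fun i => {j | i ∈ S j}
  have hZt_sum : ∀ i ω, Zt i ω = ∑ j ∈ s i, B j ω - #(s i) * (1 - p) := fun i ω => by
    rw [hZt, hZ, hdeg, sum_filter]
  have hcov : ∫ ω, Zt a ω * Zt b ω = (1 - p) * (1 - (1 - p)) * #(s a ∩ s b) := by
    simp only [hZt_sum]
    exact integral_centered_sum_mul_centered_sum hB01 hBmeas hq
      (fun j k hjk => hBindep.indepFun hjk) (s a) (s b)
  rw [integral_diagonal_mul_mul_diagonal_apply, hcov, hMrhs, hDd]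
  simp only [Matrix.smul_apply, Matrix.add_apply, diagonal_mul_diagonal, mul_diagonal, diagonal_mul,
    Matrix.sub_apply, one_apply, diagonal_apply, smul_eq_mul, one_div]
  rcases eq_or_ne a b with rfl | hab
  · have hsq : (X * Xᵀ) a a = ∑ k, X a k ^ 2 := by simp [mul_apply, sq]
    rw [inter_self, hdeg, hsq]
    simp only [if_true]
    linear_combination
      -(p * (1 - p) * (1 - (n : ℝ)⁻¹ * d a)) * mul_self_div_eq_mul_of_eq_mul (hw a)
  · have hcard : (#(s a ∩ s b) : ℝ) * n = d a * d b := by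
      rw [← filter_and]
      exact_mod_cast hpair a b hab
    simp only [if_neg hab, mul_zero, zero_mul, sub_zero, add_zero]
    rw [eq_div_of_mul_eq (by positivity) hcard]
    ring

/-- **Covariance matrix identity for weighted degrees.**
`E[D_Z̃ · X Xᵀ · D_Z̃] = p (1−p) ((1/n) D_d X Xᵀ D_d + (1/σ)(I − D_d/n) D_d²)` entrywise. -/
theorem sgc_covariance_identity
    (m n l : ℕ) (hn : 1 ≤ n)
    (S : Fin n → Finset (Fin m)) (d : Fin m → ℕ)
    (hdpos : ∀ i, 0 < d i)
    (hdeg : ∀ i : Fin m, (Finset.univ.filter (fun j => i ∈ S j)).card = d i)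
    (hpair : ∀ i i' : Fin m, i ≠ i' →
      (Finset.univ.filter (fun j => i ∈ S j ∧ i' ∈ S j)).card * n = d i * d i')
    (p : ℝ) (hp0 : 0 ≤ p) (hp1 : p < 1)
    (Ω : Type*) [MeasureSpace Ω] [IsProbabilityMeasure (ℙ : Measure Ω)]
    (B : Fin n → Ω → ℝ)
    (hB01 : ∀ j ω, B j ω = 0 ∨ B j ω = 1)
    (hBmeas : ∀ j, Measurable (B j))
    (hBp : ∀ j, (ℙ : Measure Ω) {ω | B j ω = 1} = ENNReal.ofReal (1 - p))
    (hBindep : iIndepFun B ℙ)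
    (Z : Fin m → Ω → ℝ)
    (hZ : ∀ i ω, Z i ω = ∑ j, if i ∈ S j then B j ω else 0)
    (Zt : Fin m → Ω → ℝ)
    (hZt : ∀ i ω, Zt i ω = Z i ω - (d i : ℝ) * (1 - p))
    (X : Matrix (Fin m) (Fin l) ℝ)
    (σ dbar : ℝ)
    (hdbar : dbar = (∑ i, (d i : ℝ)) / m)
    (hσ : σ = n * dbar / (∑ i, ∑ k, X i k ^ 2))
    (hw : ∀ i, (d i : ℝ) = σ * ∑ k, X i k ^ 2)
    (Dd Mrhs : Matrix (Fin m) (Fin m) ℝ)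
    (hDd : Dd = Matrix.diagonal (fun i => (d i : ℝ)))
    (hMrhs : Mrhs = (p * (1 - p)) •
      ((1 / (n : ℝ)) • (Dd * (X * Xᵀ) * Dd) +
        (1 / σ) • ((1 - (1 / (n : ℝ)) • Dd) * (Dd * Dd)))) :
    ∀ a b : Fin m,
      (∫ ω, (Matrix.diagonal (fun i => Zt i ω) * (X * Xᵀ) *
          Matrix.diagonal (fun i => Zt i ω)) a b) = Mrhs a b :=
  sgc_covariance_identity_general m n l hn S d hdeg hpair p hp1 Ω B hB01 hBmeas hBp hBindep Z hZ Zt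
    hZt X σ hw Dd Mrhs hDd hMrhs
end

section
/- (Bound on the residual noise term.) Let M := p·(1−p)·( (1/n)·D_d·X·Xᵀ·D_d + (1/σ)·(I − D_d/n)·D_d² ), where D_d and D_δ are the m×m diagonal matrices with diagonal entries d_i and δ_i := γ/(d_i·(1−p)). Then rᵀ·D_δ·M·D_δ·r ≤ γ²·(p/(1−p))·‖r‖₂²/σ. -/
open Matrix Finset

/-- **Bound on the residual noise term.**
`rᵀ D_δ M D_δ r ≤ γ² (p/(1−p)) ‖r‖₂² / σ`. -/
theorem sgc_noise_term_bound
    (m l n : ℕ) (hn : 1 ≤ n)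
    (X : Matrix (Fin m) (Fin l) ℝ) (y : Fin m → ℝ) (βstar : Fin l → ℝ)
    (hnormal : Xᵀ.mulVec (X.mulVec βstar - y) = 0)
    (p : ℝ) (hp0 : 0 ≤ p) (hp1 : p < 1)
    (γ : ℝ) (hγ : 0 < γ)
    (d : Fin m → ℝ) (hdpos : ∀ i, 0 < d i)
    (σ dbar : ℝ)
    (hdbar : dbar = (∑ i, d i) / m)
    (hσ : σ = n * dbar / (∑ i, ∑ k, X i k ^ 2))
    (hw : ∀ i, d i = σ * ∑ k, X i k ^ 2)
    (hdn : ∀ i, d i ≤ n)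
    (δ : Fin m → ℝ) (hδ : ∀ i, δ i = γ / (d i * (1 - p)))
    (M : Matrix (Fin m) (Fin m) ℝ)
    (hM : M = (p * (1 - p)) •
      ((1 / (n : ℝ)) • (Matrix.diagonal d * (X * Xᵀ) * Matrix.diagonal d) +
        (1 / σ) • ((1 - (1 / (n : ℝ)) • Matrix.diagonal d) *
          (Matrix.diagonal d * Matrix.diagonal d)))) :
    (X.mulVec βstar - y) ⬝ᵥ
        (Matrix.diagonal δ * M * Matrix.diagonal δ).mulVec (X.mulVec βstar - y) ≤
      γ ^ 2 * (p / (1 - p)) * (∑ i, (X.mulVec βstar - y) i ^ 2) / σ := by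
  rcases isEmpty_or_nonempty (Fin m) with hm | hm
  · simp [dotProduct]
  set r : Fin m → ℝ := X.mulVec βstar - y with hr
  obtain ⟨i0⟩ := hm
  have hsum0 : (0:ℝ) ≤ ∑ k, X i0 k ^ 2 := Finset.sum_nonneg fun k _ => sq_nonneg _
  have hσpos : 0 < σ := by nlinarith [hdpos i0, hw i0]
  have hp : (0:ℝ) < 1 - p := by linarith
  have hnpos : (0:ℝ) < n := by exact_mod_cast hn
  have hδd : ∀ i, δ i * d i = γ / (1 - p) := by
    intro i
    have h1 : d i ≠ 0 := (hdpos i).ne'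
    have h2 : (1:ℝ) - p ≠ 0 := hp.ne'
    rw [hδ]
    field_simp
  have hXr : ∀ k, ∑ i, X i k * r i = 0 := by
    intro k
    have := congrFun hnormal k
    simpa [Matrix.mulVec, dotProduct, Matrix.transpose_apply] using this
  -- M entry formula
  have hMentry : ∀ i j, M i j = p * (1 - p) / n * (d i * (∑ k, X i k * X j k) * d j)
      + (if i = j then p * (1 - p) / σ * ((1 - d i / n) * (d i * d i)) else 0) := by
    intro i j
    rw [hM, Matrix.diagonal_mul_diagonal]
    by_cases h : i = j <;>
      simp [h, Matrix.mul_apply, Matrix.diagonal_apply, Matrix.one_apply,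
        Matrix.mul_diagonal, Matrix.diagonal_mul, Matrix.sub_apply,
        Matrix.transpose_apply] <;>
      ring
  have expand : r ⬝ᵥ (Matrix.diagonal δ * M * Matrix.diagonal δ).mulVec r
      = ∑ i, ∑ j, r i * (δ i * M i j * δ j) * r j := by
    simp only [dotProduct, Matrix.mulVec, Matrix.diagonal_mul, Matrix.mul_diagonal]
    refine Finset.sum_congr rfl fun i _ => ?_
    rw [Finset.mul_sum]
    exact Finset.sum_congr rfl fun j _ => by ring
  have split : ∑ i, ∑ j, r i * (δ i * M i j * δ j) * r j
      = (∑ i, ∑ j, r i * (δ i * (p * (1 - p) / n *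
            (d i * (∑ k, X i k * X j k) * d j)) * δ j) * r j)
        + ∑ i, ∑ j, r i * (δ i * (if i = j then
            p * (1 - p) / σ * ((1 - d i / n) * (d i * d i)) else 0) * δ j) * r j := by
    rw [← Finset.sum_add_distrib]
    refine Finset.sum_congr rfl fun i _ => ?_
    rw [← Finset.sum_add_distrib]
    refine Finset.sum_congr rfl fun j _ => ?_
    rw [hMentry]
    ring
  have hS1 : (∑ i, ∑ j, r i * (δ i * (p * (1 - p) / n *
        (d i * (∑ k, X i k * X j k) * d j)) * δ j) * r j) = 0 := by
    have step1 : ∀ i j : Fin m, r i * (δ i * (p * (1 - p) / n *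
          (d i * (∑ k, X i k * X j k) * d j)) * δ j) * r j
        = ∑ k, (p * (1 - p) / n) *
            ((δ i * d i * (X i k * r i)) * (δ j * d j * (X j k * r j))) := by
      intro i j
      simp only [Finset.mul_sum, Finset.sum_mul]
      refine Finset.sum_congr rfl fun k _ => ?_
      ring
    calc (∑ i, ∑ j, r i * (δ i * (p * (1 - p) / n *
            (d i * (∑ k, X i k * X j k) * d j)) * δ j) * r j)
        = ∑ i, ∑ j, ∑ k, (p * (1 - p) / n) *
            ((δ i * d i * (X i k * r i)) * (δ j * d j * (X j k * r j))) := by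
          exact Finset.sum_congr rfl fun i _ => Finset.sum_congr rfl fun j _ => step1 i j
      _ = ∑ i, ∑ k : Fin l, ∑ j, (p * (1 - p) / n) *
            ((δ i * d i * (X i k * r i)) * (δ j * d j * (X j k * r j))) :=
          Finset.sum_congr rfl fun i _ => Finset.sum_comm
      _ = ∑ k, ∑ i, ∑ j, (p * (1 - p) / n) *
            ((δ i * d i * (X i k * r i)) * (δ j * d j * (X j k * r j))) :=
          Finset.sum_comm
      _ = ∑ k : Fin l, (p * (1 - p) / n) *
            ((∑ i, δ i * d i * (X i k * r i)) * (∑ j, δ j * d j * (X j k * r j))) := by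
          refine Finset.sum_congr rfl fun k _ => ?_
          rw [Finset.sum_mul_sum, Finset.mul_sum]
          exact Finset.sum_congr rfl fun i _ => by rw [Finset.mul_sum]
      _ = 0 := by
          refine Finset.sum_eq_zero fun k _ => ?_
          have : ∑ i, δ i * d i * (X i k * r i) = 0 := by
            simp only [hδd]
            rw [← Finset.mul_sum, hXr k, mul_zero]
          rw [this]
          ring
  have hS2 : (∑ i, ∑ j, r i * (δ i * (if i = j then
        p * (1 - p) / σ * ((1 - d i / n) * (d i * d i)) else 0) * δ j) * r j)
      = ∑ i, (p * (1 - p) / σ) * ((1 - d i / n) * ((γ / (1 - p)) ^ 2 * r i ^ 2)) := by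
    refine Finset.sum_congr rfl fun i _ => ?_
    rw [Finset.sum_eq_single i]
    · rw [if_pos rfl]
      have h1 := hδd i
      calc r i * (δ i * (p * (1 - p) / σ * ((1 - d i / ↑n) * (d i * d i))) * δ i) * r i
          = p * (1 - p) / σ * ((1 - d i / ↑n) * ((δ i * d i) ^ 2 * r i ^ 2)) := by ring
        _ = p * (1 - p) / σ * ((1 - d i / ↑n) * ((γ / (1 - p)) ^ 2 * r i ^ 2)) := by
            rw [h1]
    · intro j _ hji
      simp [Ne.symm hji]
    · intro h; exact absurd (Finset.mem_univ i) h
  rw [expand, split, hS1, hS2, zero_add]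
  have hRHS : γ ^ 2 * (p / (1 - p)) * (∑ i, r i ^ 2) / σ
      = ∑ i, γ ^ 2 * (p / (1 - p)) * r i ^ 2 / σ := by
    rw [Finset.mul_sum, Finset.sum_div]
  rw [hRHS]
  refine Finset.sum_le_sum fun i _ => ?_
  have h1 : 0 ≤ 1 - d i / n := by
    have := hdn i
    rw [sub_nonneg, div_le_one hnpos]
    exact this
  have h2 : 1 - d i / n ≤ 1 := by
    have := hdpos i
    have : 0 < d i / n := div_pos this hnpos
    linarith
  have hA : 0 ≤ p * (1 - p) / σ * ((γ / (1 - p)) ^ 2 * r i ^ 2) := by positivity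
  have key : p * (1 - p) / σ * ((γ / (1 - p)) ^ 2 * r i ^ 2)
      = γ ^ 2 * (p / (1 - p)) * r i ^ 2 / σ := by
    field_simp
  calc p * (1 - p) / σ * ((1 - d i / n) * ((γ / (1 - p)) ^ 2 * r i ^ 2))
      ≤ p * (1 - p) / σ * (1 * ((γ / (1 - p)) ^ 2 * r i ^ 2)) := by
        have hc : 0 ≤ p * (1 - p) / σ := by positivity
        have hq : 0 ≤ (γ / (1 - p)) ^ 2 * r i ^ 2 := by positivity
        nlinarith
    _ = γ ^ 2 * (p / (1 - p)) * r i ^ 2 / σ := by rw [one_mul, key]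
end

section
/- (Bound on the cross term.) Let M := p·(1−p)·( (1/n)·D_d·X·Xᵀ·D_d + (1/σ)·(I − D_d/n)·D_d² ), where D_d and D_δ are the m×m diagonal matrices with diagonal entries d_i and δ_i := γ/(d_i·(1−p)). Then for every v ∈ ℝ^ℓ, rᵀ·D_δ·M·D_δ·X·v ≤ (γ²·p/((1−p)·σ))·( ‖r‖₂² + ‖XᵀX‖·‖v‖₂² )/2, where ‖XᵀX‖ is the spectral norm of XᵀX. -/
/-!
Since `δ i * d i = γ / (1 - p)` for every `i`, conjugating `M` by `D_δ` gives
`p γ² / (1 - p) • ((1/n) X Xᵀ + (1/σ) (I - D_d / n))`. The first summand contributes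
`rᵀ X (Xᵀ X) v = (Xᵀ r)ᵀ (Xᵀ X v) = 0` by the normal equations. The second is diagonal with
entries `1 - d i / n ∈ [0, 1]`, so it is bounded termwise by `(r i² + (X v) i²) / 2`, and
`‖X v‖² ≤ ‖X‖² ‖v‖² = ‖Xᵀ X‖ ‖v‖²`.
-/

open Matrix Finset

section SpectralNorm

open scoped Matrix.Norms.L2Operator

theorem specNorm_eq_l2_opNorm {m l : ℕ} (A : Matrix (Fin m) (Fin l) ℝ) : specNorm A = ‖A‖ :=
  rfl

theorem sum_sq_mulVec_le_specNorm_transpose_mul {m l : ℕ} (A : Matrix (Fin m) (Fin l) ℝ)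
    (v : Fin l → ℝ) : ∑ i, (A *ᵥ v) i ^ 2 ≤ specNorm (Aᵀ * A) * ∑ k, v k ^ 2 := by
  have h := l2_opNorm_mulVec A (WithLp.toLp 2 v)
  rw [← sq_le_sq₀ (norm_nonneg _) (by positivity), mul_pow, EuclideanSpace.real_norm_sq_eq,
    EuclideanSpace.real_norm_sq_eq] at h
  rw [specNorm_eq_l2_opNorm, ← conjTranspose_eq_transpose_of_trivial,
    l2_opNorm_conjTranspose_mul_self, ← sq]
  simpa using h

end SpectralNorm

theorem dotProduct_diagonal_mulVec_le {ι : Type*} [Fintype ι] [DecidableEq ι] {a : ι → ℝ}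
    (ha₀ : ∀ i, 0 ≤ a i) (ha₁ : ∀ i, a i ≤ 1) (r s : ι → ℝ) :
    r ⬝ᵥ (diagonal a *ᵥ s) ≤ (∑ i, r i ^ 2 + ∑ i, s i ^ 2) / 2 := by
  simp only [dotProduct, mulVec_diagonal, ← sum_add_distrib, sum_div]
  gcongr with i
  -- `a rs ≤ a (r² + s²)/2 ≤ (r² + s²)/2`
  nlinarith [mul_nonneg (ha₀ i) (sq_nonneg (r i - s i)),
    mul_nonneg (sub_nonneg.2 (ha₁ i)) (add_nonneg (sq_nonneg (r i)) (sq_nonneg (s i)))]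

section DiagonalScaling

variable {ι α : Type*} [Fintype ι] [DecidableEq ι] [CommRing α] {δ d : ι → α} {c : α}

theorem diagonal_mul_diagonal_of_mul_eq (h : ∀ i, δ i * d i = c) :
    diagonal δ * diagonal d = c • (1 : Matrix ι ι α) := by
  rw [diagonal_mul_diagonal, smul_one_eq_diagonal]
  exact congrArg diagonal (funext h)

theorem diagonal_mul_mul_diagonal_of_mul_eq (h : ∀ i, δ i * d i = c) (A : Matrix ι ι α) :
    diagonal δ * (diagonal d * A * diagonal d) * diagonal δ = c ^ 2 • A := by
  have h' : diagonal d * diagonal δ = c • (1 : Matrix ι ι α) :=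
    diagonal_mul_diagonal_of_mul_eq fun i => (mul_comm _ _).trans (h i)
  rw [← Matrix.mul_assoc, ← Matrix.mul_assoc, diagonal_mul_diagonal_of_mul_eq h, Matrix.mul_assoc,
    h']
  simp only [Matrix.smul_mul, Matrix.mul_smul, Matrix.one_mul, Matrix.mul_one, smul_smul, sq]

theorem diagonal_mul_smul_add_smul_mul_diagonal_of_mul_eq (h : ∀ i, δ i * d i = c)
    (A : Matrix ι ι α) (a b e : α) :
    diagonal δ * (a • (b • (diagonal d * A * diagonal d) +
        e • ((1 - b • diagonal d) * (diagonal d * diagonal d)))) * diagonal δ =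
      (a * c ^ 2) • (b • A + e • (1 - b • diagonal d)) := by
  have hcomm : (1 - b • diagonal d) * (diagonal d * diagonal d) =
      diagonal d * (1 - b • diagonal d) * diagonal d := by
    rw [← Matrix.mul_assoc, ((Commute.one_left _).sub_left ((Commute.refl _).smul_left b)).eq]
  rw [hcomm, Matrix.mul_smul, Matrix.smul_mul, Matrix.mul_add, Matrix.add_mul, Matrix.mul_smul,
    Matrix.mul_smul, Matrix.smul_mul, Matrix.smul_mul, diagonal_mul_mul_diagonal_of_mul_eq h,
    diagonal_mul_mul_diagonal_of_mul_eq h]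
  module

end DiagonalScaling

theorem dotProduct_mul_mulVec_eq_zero {ι κ μ α : Type*} [Fintype ι] [Fintype κ] [Fintype μ]
    [CommSemiring α] {X : Matrix ι κ α} {r : ι → α} (hr : Xᵀ *ᵥ r = 0) (N : Matrix κ μ α)
    (w : μ → α) : r ⬝ᵥ ((X * N) *ᵥ w) = 0 := by
  rw [← mulVec_mulVec, dotProduct_mulVec, ← mulVec_transpose, hr, zero_dotProduct]

theorem sgc_cross_term_bound_general
    (m l n : ℕ)
    (X : Matrix (Fin m) (Fin l) ℝ) (y : Fin m → ℝ) (βstar : Fin l → ℝ)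
    (hnormal : Xᵀ.mulVec (X.mulVec βstar - y) = 0)
    (p : ℝ) (hp0 : 0 ≤ p) (hp1 : p < 1)
    (γ : ℝ)
    (d : Fin m → ℝ) (hdpos : ∀ i, 0 < d i)
    (σ dbar : ℝ)
    (hdbar : dbar = (∑ i, d i) / m)
    (hσ : σ = n * dbar / (∑ i, ∑ k, X i k ^ 2))
    (hdn : ∀ i, d i ≤ n)
    (δ : Fin m → ℝ) (hδ : ∀ i, δ i = γ / (d i * (1 - p)))
    (M : Matrix (Fin m) (Fin m) ℝ)
    (hM : M = (p * (1 - p)) •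
      ((1 / (n : ℝ)) • (Matrix.diagonal d * (X * Xᵀ) * Matrix.diagonal d) +
        (1 / σ) • ((1 - (1 / (n : ℝ)) • Matrix.diagonal d) *
          (Matrix.diagonal d * Matrix.diagonal d)))) :
    ∀ v : Fin l → ℝ,
      (X.mulVec βstar - y) ⬝ᵥ
          (Matrix.diagonal δ * M * Matrix.diagonal δ * X).mulVec v ≤
        γ ^ 2 * p / ((1 - p) * σ) *
          (((∑ i, (X.mulVec βstar - y) i ^ 2) + specNorm (Xᵀ * X) * ∑ k, v k ^ 2) / 2) := by
  intro v
  set r := X *ᵥ βstar - y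
  have hp : 0 < 1 - p := sub_pos.2 hp1
  have hσ₀ : 0 ≤ σ := by
    have hd : 0 ≤ ∑ i, d i := sum_nonneg fun i _ => (hdpos i).le
    rw [hσ, hdbar]
    positivity
  have hδd : ∀ i, δ i * d i = γ / (1 - p) := fun i => by
    rw [hδ]
    field_simp [(hdpos i).ne']
  have hdiag : (1 - (1 / (n : ℝ)) • diagonal d : Matrix (Fin m) (Fin m) ℝ) =
      diagonal fun i => 1 - d i / n := by
    rw [← diagonal_smul, ← diagonal_one, diagonal_sub]
    simp only [Pi.smul_apply, smul_eq_mul, one_div_mul_eq_div]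
  have ha₀ : ∀ i, 0 ≤ 1 - d i / n := fun i =>
    sub_nonneg.2 (div_le_one_of_le₀ (hdn i) n.cast_nonneg)
  have ha₁ : ∀ i, 1 - d i / n ≤ 1 := fun i =>
    sub_le_self _ (div_nonneg (hdpos i).le n.cast_nonneg)
  have hc : 0 ≤ γ ^ 2 * p / ((1 - p) * σ) := by positivity
  rw [hM, diagonal_mul_smul_add_smul_mul_diagonal_of_mul_eq hδd, hdiag]
  calc _ = γ ^ 2 * p / ((1 - p) * σ) * (r ⬝ᵥ (diagonal (fun i => 1 - d i / n) *ᵥ (X *ᵥ v))) := by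
        simp only [Matrix.smul_mul, Matrix.add_mul, Matrix.smul_mulVec, add_mulVec,
          dotProduct_smul, dotProduct_add, smul_eq_mul, Matrix.mul_assoc, mulVec_mulVec,
          dotProduct_mul_mulVec_eq_zero hnormal, mul_zero, zero_add]
        field_simp
    _ ≤ γ ^ 2 * p / ((1 - p) * σ) * ((∑ i, r i ^ 2 + ∑ i, (X *ᵥ v) i ^ 2) / 2) := by
        gcongr
        exact dotProduct_diagonal_mulVec_le ha₀ ha₁ r _
    _ ≤ γ ^ 2 * p / ((1 - p) * σ) *
          ((∑ i, r i ^ 2 + specNorm (Xᵀ * X) * ∑ k, v k ^ 2) / 2) := by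
        gcongr
        exact sum_sq_mulVec_le_specNorm_transpose_mul X v

/-- **Bound on the cross term.**
For every `v`, `rᵀ D_δ M D_δ X v ≤ (γ² p /((1−p) σ)) (‖r‖₂² + ‖XᵀX‖ ‖v‖₂²)/2`. -/
theorem sgc_cross_term_bound
    (m l n : ℕ) (hn : 1 ≤ n)
    (X : Matrix (Fin m) (Fin l) ℝ) (y : Fin m → ℝ) (βstar : Fin l → ℝ)
    (hnormal : Xᵀ.mulVec (X.mulVec βstar - y) = 0)
    (p : ℝ) (hp0 : 0 ≤ p) (hp1 : p < 1)
    (γ : ℝ) (hγ : 0 < γ)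
    (d : Fin m → ℝ) (hdpos : ∀ i, 0 < d i)
    (σ dbar : ℝ)
    (hdbar : dbar = (∑ i, d i) / m)
    (hσ : σ = n * dbar / (∑ i, ∑ k, X i k ^ 2))
    (hw : ∀ i, d i = σ * ∑ k, X i k ^ 2)
    (hdn : ∀ i, d i ≤ n)
    (δ : Fin m → ℝ) (hδ : ∀ i, δ i = γ / (d i * (1 - p)))
    (M : Matrix (Fin m) (Fin m) ℝ)
    (hM : M = (p * (1 - p)) •
      ((1 / (n : ℝ)) • (Matrix.diagonal d * (X * Xᵀ) * Matrix.diagonal d) +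
        (1 / σ) • ((1 - (1 / (n : ℝ)) • Matrix.diagonal d) *
          (Matrix.diagonal d * Matrix.diagonal d)))) :
    ∀ v : Fin l → ℝ,
      (X.mulVec βstar - y) ⬝ᵥ
          (Matrix.diagonal δ * M * Matrix.diagonal δ * X).mulVec v ≤
        γ ^ 2 * p / ((1 - p) * σ) *
          (((∑ i, (X.mulVec βstar - y) i ^ 2) + specNorm (Xᵀ * X) * ∑ k, v k ^ 2) / 2) :=
  sgc_cross_term_bound_general m l n X y βstar hnormal p hp0 hp1 γ d hdpos σ dbar hdbar hσ hdn δ hδ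
    M hM
end

section
/- (Unbiasedness of the SGC gradient estimator.) Let g_1,…,g_m ∈ ℝ^ℓ be arbitrary vectors and define the random vector ĝ := Σ_{j=1}^n B_j · Σ_{i ∈ S_j} g_i/(d_i·(1−p)). Then E[ĝ] = Σ_{i=1}^m g_i. -/
/-!
By linearity of expectation, `E[ĝ] = Σ_j E[B_j] • Σ_{i ∈ S_j} g_i / (d_i (1 - p))`, and a
`{0,1}`-valued `B_j` has `E[B_j] = P(B_j = 1) = 1 - p`, which cancels the `1 - p`. Exchanging
the two sums, each `g_i` is then counted once for each of the `d_i` workers holding it, with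
weight `1 / d_i`.
-/

open MeasureTheory ProbabilityTheory Finset

section ZeroOneValued

variable {Ω : Type*} {B : Ω → ℝ}

lemma indicator_setOf_eq_one_of_eq_zero_or_eq_one (hB : ∀ ω, B ω = 0 ∨ B ω = 1) :
    {ω | B ω = 1}.indicator 1 = B := by
  funext ω
  rcases hB ω with h | h <;> simp [h]

variable [MeasurableSpace Ω] {μ : Measure Ω}

lemma integrable_of_eq_zero_or_eq_one [IsFiniteMeasure μ] (hB : ∀ ω, B ω = 0 ∨ B ω = 1)
    (hBm : Measurable B) : Integrable B μ := by
  rw [← indicator_setOf_eq_one_of_eq_zero_or_eq_one hB]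
  exact (integrable_const 1).indicator (hBm (measurableSet_singleton 1))

lemma integral_eq_measureReal_of_eq_zero_or_eq_one (hB : ∀ ω, B ω = 0 ∨ B ω = 1)
    (hBm : Measurable B) : ∫ ω, B ω ∂μ = μ.real {ω | B ω = 1} := by
  conv_lhs => rw [← indicator_setOf_eq_one_of_eq_zero_or_eq_one hB]
  exact integral_indicator_one (hBm (measurableSet_singleton 1))

end ZeroOneValued

lemma integral_sum_smul_const {Ω ι E : Type*} [MeasurableSpace Ω] {μ : Measure Ω}
    [NormedAddCommGroup E] [NormedSpace ℝ E] [CompleteSpace E] (s : Finset ι) {B : ι → Ω → ℝ}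
    (hB : ∀ j ∈ s, Integrable (B j) μ) (v : ι → E) :
    ∫ ω, ∑ j ∈ s, B j ω • v j ∂μ = ∑ j ∈ s, (∫ ω, B j ω ∂μ) • v j := by
  rw [integral_finsetSum s fun j hj => (hB j hj).smul_const (v j)]
  exact sum_congr rfl fun j _ => integral_smul_const (B j) (v j)

lemma sum_sum_inv_degree_smul {ι κ K E : Type*} [Fintype ι] [Fintype κ] [DecidableEq κ]
    [DivisionRing K] [CharZero K] [AddCommGroup E] [Module K E] (S : ι → Finset κ) (d : κ → ℕ)
    (hd : ∀ i, (univ.filter fun j => i ∈ S j).card = d i) (hd0 : ∀ i, d i ≠ 0) (g : κ → E) :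
    ∑ j, ∑ i ∈ S j, (d i : K)⁻¹ • g i = ∑ i, g i := by
  rw [sum_comm' (t' := univ) (s' := fun i => univ.filter fun j => i ∈ S j) (by simp)]
  refine sum_congr rfl fun i _ => ?_
  rw [sum_const, hd, ← Nat.cast_smul_eq_nsmul K, smul_smul,
    mul_inv_cancel₀ (Nat.cast_ne_zero.mpr (hd0 i)), one_smul]

theorem sgc_unbiased_general
    (m n l : ℕ)
    (S : Fin n → Finset (Fin m)) (d : Fin m → ℕ) (hdpos : ∀ i, 0 < d i)
    (hdeg : ∀ i : Fin m, (Finset.univ.filter (fun j => i ∈ S j)).card = d i)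
    (p : ℝ) (hp1 : p < 1)
    (Ω : Type*) [MeasureSpace Ω] [IsProbabilityMeasure (ℙ : Measure Ω)]
    (B : Fin n → Ω → ℝ)
    (hB01 : ∀ j ω, B j ω = 0 ∨ B j ω = 1)
    (hBmeas : ∀ j, Measurable (B j))
    (hBp : ∀ j, (ℙ : Measure Ω) {ω | B j ω = 1} = ENNReal.ofReal (1 - p))
    (g : Fin m → EuclideanSpace ℝ (Fin l))
    (ghat : Ω → EuclideanSpace ℝ (Fin l))
    (hghat : ∀ ω, ghat ω = ∑ j, B j ω • ∑ i ∈ S j, ((d i : ℝ) * (1 - p))⁻¹ • g i) :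
    ∫ ω, ghat ω = ∑ i, g i := by
  have hq : 0 < 1 - p := by linarith
  have hEB : ∀ j, ∫ ω, B j ω = 1 - p := fun j => by
    rw [integral_eq_measureReal_of_eq_zero_or_eq_one (hB01 j) (hBmeas j), measureReal_def, hBp j,
      ENNReal.toReal_ofReal hq.le]
  calc ∫ ω, ghat ω = ∑ j, (1 - p) • ∑ i ∈ S j, ((d i : ℝ) * (1 - p))⁻¹ • g i := by
        simp only [hghat]
        rw [integral_sum_smul_const _
          fun j _ => integrable_of_eq_zero_or_eq_one (hB01 j) (hBmeas j)]
        simp only [hEB]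
    _ = ∑ j, ∑ i ∈ S j, (d i : ℝ)⁻¹ • g i := by
        simp only [smul_sum, smul_smul, mul_inv, mul_left_comm (1 - p), mul_inv_cancel₀ hq.ne',
          mul_one]
    _ = ∑ i, g i := sum_sum_inv_degree_smul S d hdeg (fun i => (hdpos i).ne') g

/-- **Unbiasedness of the SGC gradient estimator.**
If `ĝ = Σ_j B_j • Σ_{i ∈ S_j} g_i / (d_i (1−p))` then `E[ĝ] = Σ_i g_i`. -/
theorem sgc_unbiased
    (m n l : ℕ) (hn : 1 ≤ n)
    (S : Fin n → Finset (Fin m)) (d : Fin m → ℕ) (hdpos : ∀ i, 0 < d i)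
    (hdeg : ∀ i : Fin m, (Finset.univ.filter (fun j => i ∈ S j)).card = d i)
    (p : ℝ) (hp0 : 0 ≤ p) (hp1 : p < 1)
    (Ω : Type*) [MeasureSpace Ω] [IsProbabilityMeasure (ℙ : Measure Ω)]
    (B : Fin n → Ω → ℝ)
    (hB01 : ∀ j ω, B j ω = 0 ∨ B j ω = 1)
    (hBmeas : ∀ j, Measurable (B j))
    (hBp : ∀ j, (ℙ : Measure Ω) {ω | B j ω = 1} = ENNReal.ofReal (1 - p))
    (g : Fin m → EuclideanSpace ℝ (Fin l))
    (ghat : Ω → EuclideanSpace ℝ (Fin l))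
    (hghat : ∀ ω, ghat ω = ∑ j, B j ω • ∑ i ∈ S j, ((d i : ℝ) * (1 - p))⁻¹ • g i) :
    ∫ ω, ghat ω = ∑ i, g i :=
  sgc_unbiased_general m n l S d hdpos hdeg p hp1 Ω B hB01 hBmeas hBp g ghat hghat
end

section
/- (Theorem 4: SGC convergence rate for strongly convex losses.) Let W ⊆ ℝ^ℓ be nonempty, closed and convex, and let Π : ℝ^ℓ → ℝ^ℓ satisfy Π(x) ∈ W and ‖Π(x) − w‖₂ ≤ ‖x − w‖₂ for all x ∈ ℝ^ℓ and all w ∈ W (the metric projection onto W). Let ℓ_1,…,ℓ_m : ℝ^ℓ → ℝ be convex and differentiable with ‖∇ℓ_i(β)‖₂ ≤ C for all β ∈ W and all i, and set L := Σ_{i=1}^m ℓ_i. Let β* ∈ W and λ > 0 satisfy ⟨∇L(β), β − β*⟩ ≥ λ·‖β − β*‖₂² for all β ∈ W (λ-strong convexity of L with respect to its constrained minimizer β*). Let T ≥ 1 and let B_{t,j} (t = 1,…,T, j = 1,…,n) be mutually independent {0,1}-valued random variables with P(B_{t,j} = 1) = 1−p. Starting from any β_0 ∈ W, define for t = 1,…,T: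 ĝ_t := Σ_{j=1}^n B_{t,j} · Σ_{i ∈ S_j} ∇ℓ_i(β_{t−1})/(d_i·(1−p)) and β_t := Π(β_{t−1} − ĝ_t/(λ·t)). Then E‖β_T − β*‖₂² ≤ (4/(λ²·T)) · m·C² · ( p/((1−p)·d_min) + (m−1)·p/(n·(1−p)) + m ), where d_min := min_i d_i. -/
open MeasureTheory ProbabilityTheory Finset RealInnerProductSpace

/-!
Write `q = 1 - p` and `u_j(β) = Σ_{i ∈ S_j} ∇ℓ_i(β) / (d_i q)` (`codedSum`), so that
`ĝ_t = Σ_j B_{t,j} u_j(β_{t-1})`. The coins of round `t` are independent of `β_{t-1}`, which is a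
function of the earlier coins. Given the past, `ĝ_t` is therefore unbiased, as `q Σ_j u_j = ∇L`
(each `i` is held by `d_i` workers), and its second moment `q² ‖Σ_j u_j‖² + q (1 - q) Σ_j ‖u_j‖²`
is bounded, by pairwise balance, by `G = m C² (p / ((1 - p) d_min) + (m - 1) p / (n (1 - p)) + m)`.
Non-expansiveness of the projection and `λ`-strong convexity then give
`e_t ≤ (1 - 2/t) e_{t-1} + G / (λ t)²` for `e_t = E‖β_t - β*‖²`, a recursion that solves to
`e_T ≤ 4 G / (λ² T)`.
-/

theorem le_four_mul_div_of_le_rec {e : ℕ → ℝ} {G : ℝ} {T : ℕ} (he : ∀ t, 0 ≤ e t)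
    (hrec : ∀ t < T, e (t + 1) ≤ (1 - 2 / (t + 1)) * e t + G / (t + 1) ^ 2) :
    ∀ t, 1 ≤ t → t ≤ T → e t ≤ 4 * G / t := by
  intro t ht htT
  have hG : 0 ≤ G := by
    have := hrec 0 (by omega)
    norm_num at this
    linarith [he 0, he 1]
  induction t, ht using Nat.le_induction with
  | base => have := hrec 0 htT; norm_num at this ⊢; linarith [he 0]
  | succ s hs ih =>
    have hs' : (1 : ℝ) ≤ s := by exact_mod_cast hs
    have hcoef : 0 ≤ 1 - 2 / ((s : ℝ) + 1) := by
      rw [sub_nonneg, div_le_one (by positivity)]; linarith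
    have hgap : 4 * G / ((s : ℝ) + 1)
        - ((1 - 2 / ((s : ℝ) + 1)) * (4 * G / s) + G / ((s : ℝ) + 1) ^ 2)
        = G * (3 * s + 4) / (s * (s + 1) ^ 2) := by
      field_simp
      ring
    have : 0 ≤ G * (3 * s + 4) / (s * (s + 1) ^ 2) := by positivity
    push_cast
    calc e (s + 1) ≤ (1 - 2 / ((s : ℝ) + 1)) * e s + G / ((s : ℝ) + 1) ^ 2 := hrec s htT
      _ ≤ (1 - 2 / ((s : ℝ) + 1)) * (4 * G / s) + G / ((s : ℝ) + 1) ^ 2 := by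
        gcongr; exact ih (by omega)
      _ ≤ 4 * G / ((s : ℝ) + 1) := by linarith

theorem sq_norm_sub_le_of_norm_sub_le {E : Type*} [NormedAddCommGroup E] [InnerProductSpace ℝ E]
    {x y g w : E} {η : ℝ} (h : ‖y - w‖ ≤ ‖x - η • g - w‖) :
    ‖y - w‖ ^ 2 ≤ ‖x - w‖ ^ 2 - 2 * η * ⟪g, x - w⟫ + η ^ 2 * ‖g‖ ^ 2 := by
  calc ‖y - w‖ ^ 2 ≤ ‖(x - w) - η • g‖ ^ 2 := by
        rw [sub_right_comm]; gcongr
    _ = ‖x - w‖ ^ 2 - 2 * η * ⟪g, x - w⟫ + η ^ 2 * ‖g‖ ^ 2 := by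
        rw [norm_sub_sq_real, real_inner_smul_right, real_inner_comm, norm_smul, mul_pow,
          Real.norm_eq_abs, sq_abs]
        ring

theorem sum_sum_ite_mul_inner {E J : Type*} [NormedAddCommGroup E] [InnerProductSpace ℝ E]
    [Fintype J] [DecidableEq J] (q : ℝ) (x : J → E) :
    ∑ j, ∑ j', (if j = j' then q else q ^ 2) * ⟪x j, x j'⟫
      = q ^ 2 * ‖∑ j, x j‖ ^ 2 + q * (1 - q) * ∑ j, ‖x j‖ ^ 2 := by
  have hsplit : ∀ j j', (if j = j' then q else q ^ 2) * ⟪x j, x j'⟫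
      = q ^ 2 * ⟪x j, x j'⟫ + if j = j' then q * (1 - q) * ⟪x j, x j'⟫ else 0 := by
    intro j j'; split_ifs <;> ring
  simp only [hsplit, sum_add_distrib, sum_ite_eq, mem_univ, if_true, ← mul_sum,
    real_inner_self_eq_norm_sq, ← sum_inner, ← inner_sum]

theorem sum_sum_ite_eq {ι : Type*} [Fintype ι] [DecidableEq ι] (A B : ℝ) :
    ∑ i : ι, ∑ i' : ι, (if i = i' then A else B)
      = Fintype.card ι * A + Fintype.card ι * (Fintype.card ι - 1) * B := by
  have hsplit : ∀ i i' : ι, (if i = i' then A else B) = B + if i = i' then A - B else 0 := by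
    intro i i'; split_ifs <;> ring
  simp only [hsplit, sum_add_distrib, sum_const, sum_ite_eq, mem_univ, if_true, card_univ,
    nsmul_eq_mul]
  ring

theorem gradient_fun_sum {E ι : Type*} [NormedAddCommGroup E] [InnerProductSpace ℝ E]
    [CompleteSpace E] {s : Finset ι} {f : ι → E → ℝ} {x : E}
    (hf : ∀ i ∈ s, DifferentiableAt ℝ (f i) x) :
    gradient (fun y => ∑ i ∈ s, f i y) x = ∑ i ∈ s, gradient (f i) x := by
  rw [gradient, fderiv_fun_sum hf, map_sum]
  rfl

section Design

variable {ι κ : Type*} (S : κ → Finset ι)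

noncomputable def codedSum {M : Type*} [AddCommGroup M] [Module ℝ M] (d : ι → ℕ) (q : ℝ)
    (a : ι → M) (j : κ) : M :=
  ∑ i ∈ S j, ((d i : ℝ) * q)⁻¹ • a i

theorem codedSum_eq_inv_smul {M : Type*} [AddCommGroup M] [Module ℝ M] (d : ι → ℕ) (q : ℝ)
    (a : ι → M) (j : κ) : codedSum S d q a j = q⁻¹ • ∑ i ∈ S j, (d i : ℝ)⁻¹ • a i := by
  simp only [codedSum, smul_sum, smul_smul, mul_inv, mul_comm]

variable [Fintype ι] [DecidableEq ι] [Fintype κ]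

theorem sum_sum_mem_eq_sum_card_nsmul {M : Type*} [AddCommMonoid M] (g : ι → M) :
    ∑ j, ∑ i ∈ S j, g i = ∑ i, #{j | i ∈ S j} • g i := by
  rw [Finset.sum_comm' (t' := univ) (s' := fun i => {j | i ∈ S j}) (by simp)]
  simp only [sum_const]

theorem sum_sum_mem_sum_mem_eq_sum_card_nsmul {M : Type*} [AddCommMonoid M]
    (g : ι → ι → M) :
    ∑ j, ∑ i ∈ S j, ∑ i' ∈ S j, g i i' = ∑ i, ∑ i', #{j | i ∈ S j ∧ i' ∈ S j} • g i i' := by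
  simp_rw [← sum_product' (f := g), ← Fintype.sum_prod_type' (f := fun i i' => _ • g i i')]
  rw [Finset.sum_comm' (t' := univ) (s' := fun x => {j | x.1 ∈ S j ∧ x.2 ∈ S j}) (by simp)]
  simp only [sum_const]

variable {S} {d : ι → ℕ} (hdeg : ∀ i, #{j | i ∈ S j} = d i)
include hdeg

theorem smul_sum_codedSum {M : Type*} [AddCommGroup M] [Module ℝ M]
    (hd : ∀ i, d i ≠ 0) {q : ℝ} (hq : q ≠ 0) (a : ι → M) :
    q • ∑ j, codedSum S d q a j = ∑ i, a i := by
  unfold codedSum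
  rw [sum_sum_mem_eq_sum_card_nsmul, smul_sum]
  refine sum_congr rfl fun i _ => ?_
  rw [hdeg, ← Nat.cast_smul_eq_nsmul ℝ, smul_smul, smul_smul]
  have : ((d i : ℝ)) ≠ 0 := by exact_mod_cast hd i
  field_simp
  rw [one_smul]

theorem sum_sq_norm_sum_mem_inv_smul_le {E : Type*} [NormedAddCommGroup E]
    [InnerProductSpace ℝ E]
    (hpair : ∀ i i', i ≠ i' → #{j | i ∈ S j ∧ i' ∈ S j} * Fintype.card κ = d i * d i')
    {dmin C : ℝ} (hdmin0 : 0 < dmin) (hdmin : ∀ i, dmin ≤ d i) {a : ι → E}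
    (ha : ∀ i, ‖a i‖ ≤ C) :
    ∑ j, ‖∑ i ∈ S j, (d i : ℝ)⁻¹ • a i‖ ^ 2 ≤
      Fintype.card ι * C ^ 2 / dmin
        + Fintype.card ι * (Fintype.card ι - 1) * C ^ 2 / Fintype.card κ := by
  have hd : ∀ i, (d i : ℝ) ≠ 0 := fun i => (hdmin0.trans_le (hdmin i)).ne'
  have hinner : ∀ i i', ⟪a i, a i'⟫ ≤ C ^ 2 := fun i i' =>
    (real_inner_le_norm _ _).trans <| by
      nlinarith [ha i, ha i', norm_nonneg (a i), norm_nonneg (a i')]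
  have hterm : ∀ i i', #{j | i ∈ S j ∧ i' ∈ S j} • ⟪(d i : ℝ)⁻¹ • a i, (d i' : ℝ)⁻¹ • a i'⟫
      ≤ if i = i' then C ^ 2 / dmin else C ^ 2 / Fintype.card κ := by
    intro i i'
    rw [nsmul_eq_mul, real_inner_smul_left, real_inner_smul_right]
    split_ifs with h
    · subst h
      simp only [and_self, hdeg]
      rw [real_inner_self_eq_norm_sq]
      calc (d i : ℝ) * ((d i : ℝ)⁻¹ * ((d i : ℝ)⁻¹ * ‖a i‖ ^ 2)) = ‖a i‖ ^ 2 / d i := by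
            field_simp [hd i]
        _ ≤ C ^ 2 / dmin :=
            div_le_div₀ (sq_nonneg C) (pow_le_pow_left₀ (norm_nonneg _) (ha i) 2) hdmin0 (hdmin i)
    · have hN := hpair i i' h
      have hn : (Fintype.card κ : ℝ) ≠ 0 := by
        have : d i * d i' ≠ 0 := by exact_mod_cast mul_ne_zero (hd i) (hd i')
        exact_mod_cast right_ne_zero_of_mul (hN.symm ▸ this)
      have hN' : (#{j | i ∈ S j ∧ i' ∈ S j} : ℝ) = d i * d i' / Fintype.card κ := by
        rw [eq_div_iff hn]; exact_mod_cast hN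
      rw [hN']
      calc (d i : ℝ) * d i' / Fintype.card κ * ((d i : ℝ)⁻¹ * ((d i' : ℝ)⁻¹ * ⟪a i, a i'⟫))
          = ⟪a i, a i'⟫ / Fintype.card κ := by field_simp [hd i, hd i']
        _ ≤ C ^ 2 / Fintype.card κ := by gcongr; exact hinner i i'
  simp_rw [← real_inner_self_eq_norm_sq, sum_inner, inner_sum]
  rw [sum_sum_mem_sum_mem_eq_sum_card_nsmul]
  calc _ ≤ ∑ i : ι, ∑ i' : ι, (if i = i' then C ^ 2 / dmin else C ^ 2 / Fintype.card κ) :=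
        sum_le_sum fun i _ => sum_le_sum fun i' _ => hterm i i'
    _ = _ := by rw [sum_sum_ite_eq]; ring

theorem codedSum_second_moment_le {E : Type*} [NormedAddCommGroup E] [InnerProductSpace ℝ E]
    (hpair : ∀ i i', i ≠ i' → #{j | i ∈ S j ∧ i' ∈ S j} * Fintype.card κ = d i * d i')
    {dmin C p : ℝ} (hdmin0 : 0 < dmin) (hdmin : ∀ i, dmin ≤ d i) (hp0 : 0 ≤ p) (hp1 : p < 1)
    {a : ι → E} (ha : ∀ i, ‖a i‖ ≤ C) :
    (1 - p) ^ 2 * ‖∑ j, codedSum S d (1 - p) a j‖ ^ 2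
        + (1 - p) * p * ∑ j, ‖codedSum S d (1 - p) a j‖ ^ 2 ≤
      Fintype.card ι * C ^ 2 * (p / ((1 - p) * dmin)
        + (Fintype.card ι - 1) * p / (Fintype.card κ * (1 - p)) + Fintype.card ι) := by
  have hq : 1 - p ≠ 0 := (sub_pos.2 hp1).ne'
  have hd : ∀ i, d i ≠ 0 := fun i => by exact_mod_cast (hdmin0.trans_le (hdmin i)).ne'
  have hmean : (1 - p) ^ 2 * ‖∑ j, codedSum S d (1 - p) a j‖ ^ 2 ≤ (Fintype.card ι * C) ^ 2 := by
    rw [← sq_abs (1 - p), ← mul_pow, ← Real.norm_eq_abs, ← norm_smul,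
      smul_sum_codedSum hdeg hd hq]
    gcongr
    calc ‖∑ i, a i‖ ≤ ∑ i, ‖a i‖ := norm_sum_le _ _
      _ ≤ ∑ _i : ι, C := sum_le_sum fun i _ => ha i
      _ = Fintype.card ι * C := by rw [sum_const, card_univ, nsmul_eq_mul]
  have hscale : ∑ j, ‖codedSum S d (1 - p) a j‖ ^ 2
      = (1 - p)⁻¹ ^ 2 * ∑ j, ‖∑ i ∈ S j, (d i : ℝ)⁻¹ • a i‖ ^ 2 := by
    simp_rw [codedSum_eq_inv_smul, norm_smul, mul_pow, norm_inv, Real.norm_eq_abs, inv_pow,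
      sq_abs]
    rw [mul_sum]
  have hp : (1 - p) * p * (1 - p)⁻¹ ^ 2 = p / (1 - p) := by field_simp
  rw [hscale, ← mul_assoc, hp]
  calc _ ≤ (Fintype.card ι * C) ^ 2 + p / (1 - p) * (Fintype.card ι * C ^ 2 / dmin
        + Fintype.card ι * (Fintype.card ι - 1) * C ^ 2 / Fintype.card κ) := by
        gcongr
        exact sum_sq_norm_sum_mem_inv_smul_le hdeg hpair hdmin0 hdmin ha
    _ = _ := by simp only [div_eq_mul_inv, mul_inv]; ring

end Design

theorem measurable_decide_eq {α : Type*} [MeasurableSpace α] [MeasurableSingletonClass α]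
    [DecidableEq α] (a : α) : Measurable fun x : α => decide (x = a) :=
  measurable_to_countable' fun y => by
    cases y
    · exact (measurableSet_singleton a).compl.congr (by ext; simp)
    · exact (measurableSet_singleton a).congr (by ext; simp)

-- Boolean coins: every function of finitely many of them is measurable and integrable, so the
-- iterates, built from gradients and the projection, need no regularity at all.
theorem exists_bool_of_forall_eq_zero_or_one {Ω ι : Type*} [MeasurableSpace Ω]
    {μ : Measure Ω} {B : ι → Ω → ℝ} (h01 : ∀ k ω, B k ω = 0 ∨ B k ω = 1)
    (hmeas : ∀ k, Measurable (B k)) (hind : iIndepFun B μ) :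
    ∃ b : ι → Ω → Bool, iIndepFun b μ ∧ (∀ k, Measurable (b k)) ∧
      (∀ k, {ω | b k ω} = {ω | B k ω = 1}) ∧ ∀ k ω, B k ω = if b k ω then 1 else 0 :=
  ⟨fun k ω => decide (B k ω = 1), hind.comp _ fun _ => measurable_decide_eq 1,
    fun k => (measurable_decide_eq 1).comp (hmeas k), fun k => by simp,
    fun k ω => by rcases h01 k ω with h | h <;> simp [h]⟩

theorem exists_dependsOn_of_recursion {Ω ι γ α : Type*} {T : ℕ} {K : ℕ → Set ι} (hK : Monotone K)
    {x : ℕ → Ω → α} {a : Ω → ι → γ} {x₀ : α} (hx₀ : ∀ ω, x 0 ω = x₀)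
    (step : Fin T → (ι → γ) → α → α) (hstep : ∀ t z, DependsOn (step t · z) (K (t + 1)))
    (hrec : ∀ t : Fin T, ∀ ω, x (t + 1) ω = step t (a ω) (x t ω)) :
    ∀ t ≤ T, ∃ F : (ι → γ) → α, DependsOn F (K t) ∧ ∀ ω, x t ω = F (a ω) := by
  intro t ht
  induction t with
  | zero => exact ⟨fun _ => x₀, fun _ _ _ => rfl, hx₀⟩
  | succ t ih =>
    obtain ⟨F, hF, hxF⟩ := ih (by omega)
    refine ⟨fun v => step ⟨t, ht⟩ v (F v), fun v w h => ?_, fun ω => by rw [hrec ⟨t, ht⟩, hxF]⟩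
    show step _ v (F v) = step _ w (F w)
    rw [hF fun i hi => h i (hK t.le_succ hi)]
    exact hstep ⟨t, ht⟩ _ h

section Bernoulli

variable {Ω ι : Type*} [MeasurableSpace Ω] {μ : Measure Ω} {b : ι → Ω → Bool}

theorem integrable_comp_of_finite {F : Type*} [NormedAddCommGroup F] [Finite ι]
    [IsFiniteMeasure μ] (hb : ∀ i, Measurable (b i)) (G : (ι → Bool) → F) :
    Integrable (fun ω => G (fun i => b i ω)) μ :=
  Integrable.of_finite.comp_measurable (measurable_pi_lambda _ hb)

theorem indepFun_comp_of_dependsOn (hb : iIndepFun b μ) (hbm : ∀ i, Measurable (b i))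
    {s K : Finset ι} (hsK : Disjoint s K) (φ : (s → Bool) → ℝ) {G : (ι → Bool) → ℝ}
    (hG : DependsOn G K) :
    IndepFun (fun ω => φ (fun i : s => b i ω)) (fun ω => G (fun i => b i ω)) μ := by
  obtain ⟨g, rfl⟩ := dependsOn_iff_exists_comp.1 hG
  exact (hb.indepFun_finset s K hsK hbm).comp (measurable_of_countable φ)
    (measurable_of_countable g)

theorem integral_ite_eq_measureReal (hbm : ∀ i, Measurable (b i)) (k : ι) :
    ∫ ω, (if b k ω then (1 : ℝ) else 0) ∂μ = μ.real {ω | b k ω} := by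
  rw [← integral_indicator_one (show MeasurableSet {ω | b k ω} from
    hbm k (measurableSet_singleton true))]
  congr 1 with ω
  simp [Set.indicator_apply]

variable [IsProbabilityMeasure μ] [Fintype ι] (hb : iIndepFun b μ)
  (hbm : ∀ i, Measurable (b i)) {q : ℝ} (hq : ∀ i, μ.real {ω | b i ω} = q) {K : Finset ι}
include hb hbm hq

theorem integral_ite_mul_of_dependsOn {G : (ι → Bool) → ℝ} (hG : DependsOn G K) {k : ι}
    (hk : k ∉ K) :
    ∫ ω, (if b k ω then 1 else 0) * G (fun i => b i ω) ∂μ = q * ∫ ω, G (fun i => b i ω) ∂μ := by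
  have hind := indepFun_comp_of_dependsOn hb hbm (s := {k}) (by simpa using hk)
    (fun y => if y ⟨k, mem_singleton_self k⟩ then 1 else 0) hG
  rw [← hq k, ← integral_ite_eq_measureReal hbm k]
  exact hind.integral_mul_eq_mul_integral
    (integrable_comp_of_finite hbm (fun v => if v k then (1 : ℝ) else 0)).1
    (integrable_comp_of_finite hbm G).1

theorem integral_ite_mul_ite_mul_of_dependsOn [DecidableEq ι] {G : (ι → Bool) → ℝ}
    (hG : DependsOn G K) {k k' : ι} (hk : k ∉ K) (hk' : k' ∉ K) :
    ∫ ω, (if b k ω then 1 else 0) * (if b k' ω then 1 else 0) * G (fun i => b i ω) ∂μ =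
      (if k = k' then q else q ^ 2) * ∫ ω, G (fun i => b i ω) ∂μ := by
  split_ifs with hkk
  · subst hkk
    rw [← integral_ite_mul_of_dependsOn hb hbm hq hG hk]
    congr 1 with ω
    cases b k ω <;> simp
  have hind := indepFun_comp_of_dependsOn hb hbm (s := {k, k'}) (by simp [hk, hk'])
    (fun y => (if y ⟨k, by simp⟩ then 1 else 0) * (if y ⟨k', by simp⟩ then 1 else 0)) hG
  have hpair : ∫ ω, (if b k ω then (1 : ℝ) else 0) * (if b k' ω then 1 else 0) ∂μ = q ^ 2 := by
    have hdep : DependsOn (fun v : ι → Bool => if v k' then (1 : ℝ) else 0) ({k'} : Finset ι) :=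
      fun v w h => by simp only [h k' (by simp)]
    rw [integral_ite_mul_of_dependsOn hb hbm hq hdep (by simpa using hkk),
      integral_ite_eq_measureReal hbm, hq, sq]
  rw [← hpair]
  exact hind.integral_mul_eq_mul_integral (integrable_comp_of_finite hbm
    (fun v => (if v k then (1 : ℝ) else 0) * (if v k' then 1 else 0))).1
    (integrable_comp_of_finite hbm G).1

variable {E J : Type*} [NormedAddCommGroup E] [InnerProductSpace ℝ E] [Fintype J]
  {k : J → ι} (hkK : ∀ j, k j ∉ K) {u : J → (ι → Bool) → E} (hu : ∀ j, DependsOn (u j) K)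
include hkK hu

theorem integral_inner_sum_ite_smul {y : (ι → Bool) → E} (hy : DependsOn y K) :
    ∫ ω, ⟪∑ j, (if b (k j) ω then (1 : ℝ) else 0) • u j (fun i => b i ω), y (fun i => b i ω)⟫ ∂μ
      = q * ∫ ω, ⟪∑ j, u j (fun i => b i ω), y (fun i => b i ω)⟫ ∂μ := by
  simp_rw [sum_inner, real_inner_smul_left]
  rw [integral_finsetSum _ fun j _ => integrable_comp_of_finite hbm
      (fun v => (if v (k j) then (1 : ℝ) else 0) * ⟪u j v, y v⟫),
    integral_finsetSum _ fun j _ => integrable_comp_of_finite hbm (fun v => ⟪u j v, y v⟫),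
    mul_sum]
  exact sum_congr rfl fun j _ => integral_ite_mul_of_dependsOn hb hbm hq
    (G := fun v => ⟪u j v, y v⟫) (fun v w h => by simp only [hu j h, hy h]) (hkK j)

theorem integral_sq_norm_sum_ite_smul (hk : Function.Injective k) :
    ∫ ω, ‖∑ j, (if b (k j) ω then (1 : ℝ) else 0) • u j (fun i => b i ω)‖ ^ 2 ∂μ
      = ∫ ω, (q ^ 2 * ‖∑ j, u j (fun i => b i ω)‖ ^ 2
          + q * (1 - q) * ∑ j, ‖u j (fun i => b i ω)‖ ^ 2) ∂μ := by
  classical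
  simp_rw [← sum_sum_ite_mul_inner, ← real_inner_self_eq_norm_sq, sum_inner, inner_sum,
    real_inner_smul_left, real_inner_smul_right, ← mul_assoc]
  rw [integral_finsetSum _ fun j _ => integrable_finsetSum _ fun j' _ =>
      integrable_comp_of_finite hbm (fun v => (if v (k j) then (1 : ℝ) else 0) *
        (if v (k j') then 1 else 0) * ⟪u j v, u j' v⟫),
    integral_finsetSum _ fun j _ => integrable_finsetSum _ fun j' _ =>
      integrable_comp_of_finite hbm (fun v => (if j = j' then q else q ^ 2) * ⟪u j v, u j' v⟫)]
  refine sum_congr rfl fun j _ => ?_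
  rw [integral_finsetSum _ fun j' _ => integrable_comp_of_finite hbm
      (fun v => (if v (k j) then (1 : ℝ) else 0) * (if v (k j') then 1 else 0) * ⟪u j v, u j' v⟫),
    integral_finsetSum _ fun j' _ => integrable_comp_of_finite hbm
      (fun v => (if j = j' then q else q ^ 2) * ⟪u j v, u j' v⟫)]
  refine sum_congr rfl fun j' _ => ?_
  rw [integral_ite_mul_ite_mul_of_dependsOn hb hbm hq (G := fun v => ⟪u j v, u j' v⟫)
    (fun v w h => by simp only [hu j h, hu j' h]) (hkK j) (hkK j'), hk.eq_iff,
    integral_const_mul]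

end Bernoulli

theorem integral_sq_norm_sub_le_of_projected_step {Ω ι E J : Type*} [MeasurableSpace Ω]
    {μ : Measure Ω} [IsProbabilityMeasure μ] [Fintype ι] [NormedAddCommGroup E]
    [InnerProductSpace ℝ E] [Fintype J] {b : ι → Ω → Bool} (hb : iIndepFun b μ)
    (hbm : ∀ i, Measurable (b i)) {q : ℝ} (hq : ∀ i, μ.real {ω | b i ω} = q) {K : Finset ι}
    {k : J → ι} (hk : Function.Injective k) (hkK : ∀ j, k j ∉ K)
    {x : (ι → Bool) → E} (hx : DependsOn x K) (g : J → E → E) {W : Set E}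
    (hxW : ∀ ω, x (fun i => b i ω) ∈ W) {w : E} {lam G η : ℝ} (hη : 0 ≤ η)
    (hdrift : ∀ z ∈ W, lam * ‖z - w‖ ^ 2 ≤ q * ⟪∑ j, g j z, z - w⟫)
    (hvar : ∀ z ∈ W, q ^ 2 * ‖∑ j, g j z‖ ^ 2 + q * (1 - q) * ∑ j, ‖g j z‖ ^ 2 ≤ G)
    {x' : Ω → E} (hx' : ∀ ω, ‖x' ω - w‖ ≤ ‖x (fun i => b i ω)
      - η • ∑ j, (if b (k j) ω then (1 : ℝ) else 0) • g j (x (fun i => b i ω)) - w‖) :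
    ∫ ω, ‖x' ω - w‖ ^ 2 ∂μ ≤
      (1 - 2 * η * lam) * ∫ ω, ‖x (fun i => b i ω) - w‖ ^ 2 ∂μ + η ^ 2 * G := by
  set ghat : (ι → Bool) → E := fun v => ∑ j, (if v (k j) then (1 : ℝ) else 0) • g j (x v)
  have hgx : ∀ j, DependsOn (fun v => g j (x v)) K := fun j v v' h => by simp only [hx h]
  have hxw : DependsOn (fun v => x v - w) K := fun v v' h => by simp only [hx h]
  have hint_dist := integrable_comp_of_finite (μ := μ) hbm (fun v => ‖x v - w‖ ^ 2)
  have hint_drift := integrable_comp_of_finite (μ := μ) hbm (fun v => ⟪ghat v, x v - w⟫)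
  have hint_var := integrable_comp_of_finite (μ := μ) hbm (fun v => ‖ghat v‖ ^ 2)
  have hdrift_int : lam * ∫ ω, ‖x (fun i => b i ω) - w‖ ^ 2 ∂μ
      ≤ ∫ ω, ⟪ghat (fun i => b i ω), x (fun i => b i ω) - w⟫ ∂μ := by
    rw [integral_inner_sum_ite_smul hb hbm hq hkK hgx hxw, ← integral_const_mul,
      ← integral_const_mul]
    exact integral_mono (hint_dist.const_mul lam)
      ((integrable_comp_of_finite hbm fun v => ⟪∑ j, g j (x v), x v - w⟫).const_mul q)
      fun ω => hdrift _ (hxW ω)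
  have hvar_int : ∫ ω, ‖ghat (fun i => b i ω)‖ ^ 2 ∂μ ≤ G := by
    rw [integral_sq_norm_sum_ite_smul hb hbm hq hkK hgx hk]
    calc _ ≤ ∫ _ω, G ∂μ := integral_mono (integrable_comp_of_finite hbm fun v =>
            q ^ 2 * ‖∑ j, g j (x v)‖ ^ 2 + q * (1 - q) * ∑ j, ‖g j (x v)‖ ^ 2)
          (integrable_const G) fun ω => hvar _ (hxW ω)
      _ = G := by simp
  calc ∫ ω, ‖x' ω - w‖ ^ 2 ∂μ
      ≤ ∫ ω, (‖x (fun i => b i ω) - w‖ ^ 2 - 2 * η * ⟪ghat (fun i => b i ω), x (fun i => b i ω) - w⟫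
          + η ^ 2 * ‖ghat (fun i => b i ω)‖ ^ 2) ∂μ :=
        integral_mono_of_nonneg (ae_of_all _ fun ω => by positivity)
          ((hint_dist.sub (hint_drift.const_mul _)).add (hint_var.const_mul _))
          (ae_of_all _ fun ω => sq_norm_sub_le_of_norm_sub_le (hx' ω))
    _ = ∫ ω, ‖x (fun i => b i ω) - w‖ ^ 2 ∂μ
          - 2 * η * ∫ ω, ⟪ghat (fun i => b i ω), x (fun i => b i ω) - w⟫ ∂μ
          + η ^ 2 * ∫ ω, ‖ghat (fun i => b i ω)‖ ^ 2 ∂μ := by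
        rw [integral_add, integral_sub, integral_const_mul, integral_const_mul]
        exacts [hint_dist, hint_drift.const_mul _, hint_dist.sub (hint_drift.const_mul _),
          hint_var.const_mul _]
    _ ≤ _ := by
        nlinarith [mul_le_mul_of_nonneg_left hdrift_int (by positivity : (0 : ℝ) ≤ 2 * η),
          mul_le_mul_of_nonneg_left hvar_int (sq_nonneg η)]

theorem integral_sq_norm_sub_le_of_projected_sgd {Ω E J : Type*} [MeasurableSpace Ω]
    {μ : Measure Ω} [IsProbabilityMeasure μ] [NormedAddCommGroup E] [InnerProductSpace ℝ E]
    [Fintype J] {T : ℕ} (hT : 1 ≤ T) {b : Fin T × J → Ω → Bool} (hb : iIndepFun b μ)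
    (hbm : ∀ k, Measurable (b k)) {q : ℝ} (hq : ∀ k, μ.real {ω | b k ω} = q)
    {W : Set E} {proj : E → E} (hprojW : ∀ x, proj x ∈ W) {w : E}
    (hproj : ∀ x, ‖proj x - w‖ ≤ ‖x - w‖) (g : J → E → E) {lam G : ℝ} (hlam : 0 < lam)
    (hdrift : ∀ z ∈ W, lam * ‖z - w‖ ^ 2 ≤ q * ⟪∑ j, g j z, z - w⟫)
    (hvar : ∀ z ∈ W, q ^ 2 * ‖∑ j, g j z‖ ^ 2 + q * (1 - q) * ∑ j, ‖g j z‖ ^ 2 ≤ G)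
    {β : ℕ → Ω → E} {β₀ : E} (hβ₀W : β₀ ∈ W) (hβ₀ : ∀ ω, β 0 ω = β₀)
    (hrec : ∀ t : Fin T, ∀ ω, β (t + 1) ω = proj (β t ω - (1 / (lam * ((t : ℕ) + 1))) •
      ∑ j, (if b (t, j) ω then (1 : ℝ) else 0) • g j (β t ω))) :
    ∫ ω, ‖β T ω - w‖ ^ 2 ∂μ ≤ 4 / (lam ^ 2 * T) * G := by
  set K : ℕ → Finset (Fin T × J) := fun t => {k | (k.1 : ℕ) < t}
  have hpath := exists_dependsOn_of_recursion (K := fun t => (K t : Set (Fin T × J)))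
    (fun s t hst k hk => by simp [K] at hk ⊢; omega) hβ₀
    (fun t v z => proj (z - (1 / (lam * ((t : ℕ) + 1))) •
      ∑ j, (if v (t, j) then (1 : ℝ) else 0) • g j z))
    (fun t z v v' h => by simp only [h (t, _) (by simp [K])]) (a := fun ω k => b k ω) hrec
  have hW : ∀ t ≤ T, ∀ ω, β t ω ∈ W := by
    rintro (_ | t) ht ω
    · exact hβ₀ ω ▸ hβ₀W
    · exact hrec ⟨t, ht⟩ ω ▸ hprojW _
  set e : ℕ → ℝ := fun t => ∫ ω, ‖β t ω - w‖ ^ 2 ∂μ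
  have hstep : ∀ t < T, e (t + 1) ≤ (1 - 2 / (t + 1)) * e t + G / lam ^ 2 / (t + 1) ^ 2 := by
    intro t ht
    obtain ⟨F, hF, hβF⟩ := hpath t ht.le
    have := integral_sq_norm_sub_le_of_projected_step hb hbm hq (K := K t)
      (k := fun j => (⟨t, ht⟩, j)) (fun j j' h => (Prod.ext_iff.1 h).2) (fun j => by simp [K])
      hF g (fun ω => hβF ω ▸ hW t ht.le ω) (η := 1 / (lam * (t + 1))) (by positivity)
      hdrift hvar (x' := β (t + 1)) fun ω => by rw [hrec ⟨t, ht⟩, hβF]; exact hproj _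
    simp only [e, hβF]
    convert this using 2 <;> field_simp
  calc e T ≤ 4 * (G / lam ^ 2) / T :=
        le_four_mul_div_of_le_rec (e := e) (fun t => integral_nonneg fun ω => sq_nonneg _) hstep
          T hT le_rfl
    _ = 4 / (lam ^ 2 * T) * G := by ring

theorem sgc_strongly_convex_rate_general
    (m n l T : ℕ) (hm : 0 < m) (hT : 1 ≤ T)
    (S : Fin n → Finset (Fin m)) (d : Fin m → ℕ) (hdpos : ∀ i, 0 < d i)
    (hdeg : ∀ i : Fin m, (Finset.univ.filter (fun j => i ∈ S j)).card = d i)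
    (hpair : ∀ i i' : Fin m, i ≠ i' →
      (Finset.univ.filter (fun j => i ∈ S j ∧ i' ∈ S j)).card * n = d i * d i')
    (p : ℝ) (hp0 : 0 ≤ p) (hp1 : p < 1)
    (W : Set (EuclideanSpace ℝ (Fin l)))
    (proj : EuclideanSpace ℝ (Fin l) → EuclideanSpace ℝ (Fin l))
    (hprojW : ∀ x, proj x ∈ W)
    (hproj : ∀ x, ∀ w ∈ W, ‖proj x - w‖ ≤ ‖x - w‖)
    (f : Fin m → EuclideanSpace ℝ (Fin l) → ℝ)
    (hdiff : ∀ i, Differentiable ℝ (f i))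
    (C : ℝ) (hC : ∀ i, ∀ β ∈ W, ‖gradient (f i) β‖ ≤ C)
    (βstar : EuclideanSpace ℝ (Fin l)) (hβstarW : βstar ∈ W)
    (lam : ℝ) (hlam : 0 < lam)
    (hstrong : ∀ β ∈ W,
      ⟪gradient (fun b => ∑ i, f i b) β, β - βstar⟫ ≥ lam * ‖β - βstar‖ ^ 2)
    (Ω : Type*) [MeasureSpace Ω] [IsProbabilityMeasure (ℙ : Measure Ω)]
    (B : Fin T × Fin n → Ω → ℝ)
    (hB01 : ∀ tj ω, B tj ω = 0 ∨ B tj ω = 1)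
    (hBmeas : ∀ tj, Measurable (B tj))
    (hBp : ∀ tj, (ℙ : Measure Ω) {ω | B tj ω = 1} = ENNReal.ofReal (1 - p))
    (hBindep : iIndepFun B ℙ)
    (β0 : EuclideanSpace ℝ (Fin l)) (hβ0W : β0 ∈ W)
    (β : ℕ → Ω → EuclideanSpace ℝ (Fin l))
    (ghat : Fin T → Ω → EuclideanSpace ℝ (Fin l))
    (hβ0 : ∀ ω, β 0 ω = β0)
    (hghat : ∀ t : Fin T, ∀ ω, ghat t ω =
      ∑ j, B (t, j) ω • ∑ i ∈ S j, ((d i : ℝ) * (1 - p))⁻¹ • gradient (f i) (β t ω))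
    (hrec : ∀ t : Fin T, ∀ ω,
      β (t + 1) ω = proj (β t ω - (1 / (lam * ((t : ℕ) + 1))) • ghat t ω))
    (dmin : ℝ)
    (hdmin : dmin = Finset.univ.inf' ⟨⟨0, hm⟩, Finset.mem_univ _⟩ (fun i : Fin m => (d i : ℝ))) :
    ∫ ω, ‖β T ω - βstar‖ ^ 2 ≤
      4 / (lam ^ 2 * T) *
        (m * C ^ 2 * (p / ((1 - p) * dmin) + (m - 1) * p / (n * (1 - p)) + m)) := by
  have hq : 0 < 1 - p := sub_pos.2 hp1
  have hdmin0 : 0 < dmin := hdmin ▸ (lt_inf'_iff _).2 fun i _ => by exact_mod_cast hdpos i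
  have hdmin_le : ∀ i, dmin ≤ d i := fun i => hdmin ▸ inf'_le _ (mem_univ i)
  obtain ⟨b, hb, hbm, hbB, hBb⟩ := exists_bool_of_forall_eq_zero_or_one hB01 hBmeas hBindep
  refine integral_sq_norm_sub_le_of_projected_sgd hT hb hbm (q := 1 - p)
    (fun k => by rw [hbB, measureReal_def, hBp, ENNReal.toReal_ofReal hq.le]) hprojW
    (fun x => hproj x _ hβstarW) (fun j z => codedSum S d (1 - p) (fun i => gradient (f i) z) j)
    hlam (fun z hz => ?_) (fun z hz => ?_) hβ0W hβ0
    fun t ω => by rw [hrec, hghat]; simp only [hBb]; rfl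
  · rw [← real_inner_smul_left, smul_sum_codedSum hdeg (fun i => (hdpos i).ne') hq.ne',
      ← gradient_fun_sum fun i _ => (hdiff i).differentiableAt]
    exact hstrong z hz
  · rw [sub_sub_cancel]
    simpa using codedSum_second_moment_le hdeg (by simpa using hpair) hdmin0 hdmin_le hp0 hp1
      fun i => hC i z hz

/-- **Theorem 4: SGC convergence rate for strongly convex losses.**
For a λ-strongly convex loss `L = Σ_i ℓ_i` with bounded partial gradients on the constraint
set `W`, projected SGC with step sizes `1/(λ t)` satisfies
`E‖β_T − β*‖₂² ≤ (4/(λ² T)) m C² (p/((1−p) d_min) + (m−1) p/(n(1−p)) + m)`. -/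
theorem sgc_strongly_convex_rate
    (m n l T : ℕ) (hn : 1 ≤ n) (hm : 0 < m) (hT : 1 ≤ T)
    (S : Fin n → Finset (Fin m)) (d : Fin m → ℕ) (hdpos : ∀ i, 0 < d i)
    (hdeg : ∀ i : Fin m, (Finset.univ.filter (fun j => i ∈ S j)).card = d i)
    (hpair : ∀ i i' : Fin m, i ≠ i' →
      (Finset.univ.filter (fun j => i ∈ S j ∧ i' ∈ S j)).card * n = d i * d i')
    (p : ℝ) (hp0 : 0 ≤ p) (hp1 : p < 1)
    (W : Set (EuclideanSpace ℝ (Fin l)))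
    (hWne : W.Nonempty) (hWclosed : IsClosed W) (hWconv : Convex ℝ W)
    (proj : EuclideanSpace ℝ (Fin l) → EuclideanSpace ℝ (Fin l))
    (hprojW : ∀ x, proj x ∈ W)
    (hproj : ∀ x, ∀ w ∈ W, ‖proj x - w‖ ≤ ‖x - w‖)
    (f : Fin m → EuclideanSpace ℝ (Fin l) → ℝ)
    (hconv : ∀ i, ConvexOn ℝ Set.univ (f i))
    (hdiff : ∀ i, Differentiable ℝ (f i))
    (C : ℝ) (hC : ∀ i, ∀ β ∈ W, ‖gradient (f i) β‖ ≤ C)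
    (βstar : EuclideanSpace ℝ (Fin l)) (hβstarW : βstar ∈ W)
    (lam : ℝ) (hlam : 0 < lam)
    (hstrong : ∀ β ∈ W,
      ⟪gradient (fun b => ∑ i, f i b) β, β - βstar⟫ ≥ lam * ‖β - βstar‖ ^ 2)
    (Ω : Type*) [MeasureSpace Ω] [IsProbabilityMeasure (ℙ : Measure Ω)]
    (B : Fin T × Fin n → Ω → ℝ)
    (hB01 : ∀ tj ω, B tj ω = 0 ∨ B tj ω = 1)
    (hBmeas : ∀ tj, Measurable (B tj))
    (hBp : ∀ tj, (ℙ : Measure Ω) {ω | B tj ω = 1} = ENNReal.ofReal (1 - p))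
    (hBindep : iIndepFun B ℙ)
    (β0 : EuclideanSpace ℝ (Fin l)) (hβ0W : β0 ∈ W)
    (β : ℕ → Ω → EuclideanSpace ℝ (Fin l))
    (ghat : Fin T → Ω → EuclideanSpace ℝ (Fin l))
    (hβ0 : ∀ ω, β 0 ω = β0)
    (hghat : ∀ t : Fin T, ∀ ω, ghat t ω =
      ∑ j, B (t, j) ω • ∑ i ∈ S j, ((d i : ℝ) * (1 - p))⁻¹ • gradient (f i) (β t ω))
    (hrec : ∀ t : Fin T, ∀ ω,
      β (t + 1) ω = proj (β t ω - (1 / (lam * ((t : ℕ) + 1))) • ghat t ω))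
    (dmin : ℝ)
    (hdmin : dmin = Finset.univ.inf' ⟨⟨0, hm⟩, Finset.mem_univ _⟩ (fun i : Fin m => (d i : ℝ))) :
    ∫ ω, ‖β T ω - βstar‖ ^ 2 ≤
      4 / (lam ^ 2 * T) *
        (m * C ^ 2 * (p / ((1 - p) * dmin) + (m - 1) * p / (n * (1 - p)) + m)) :=
  sgc_strongly_convex_rate_general m n l T hm hT S d hdpos hdeg hpair p hp0 hp1 W proj hprojW hproj
    f hdiff C hC βstar hβstarW lam hlam hstrong Ω B hB01 hBmeas hBp hBindep β0 hβ0W β ghat hβ0 hghat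
    hrec dmin hdmin
end
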